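/- arXiv:math/0702129 — 10 statements merged into one kernel-verified Lean document; each statement's English description precedes it below -/
import Mathlib

section
/- Let k and ℓ be integers with ⌈3k/2⌉ ≤ ℓ < 2k (the Szegő range). If n is an integer with n ≥ 3 and n·(2k − ℓ) < ℓ, then there is no (k,ℓ)-tight multigraph on a vertex set of cardinality n. -/
/-- The number of edges of the multiset `E` (counted with multiplicity)
whose endpoints both lie in the vertex subset `S`. -/
def spanCount {V : Type*} [DecidableEq V] (E : Multiset (Sym2 V)) (S : Finset V) : ℕ :=
  (E.filter (fun e => e ∈ S.sym2)).card

/-- A multigraph on the finite vertex type `V` with edge multiset `E` is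
`(k,ℓ)`-sparse if every subset `S` of vertices spans at most `max 0 (k|S| - ℓ)` edges. -/
def Sparse {V : Type*} [Fintype V] [DecidableEq V] (k l : ℤ) (E : Multiset (Sym2 V)) : Prop :=
  ∀ S : Finset V, (spanCount E S : ℤ) ≤ max 0 (k * S.card - l)

/-- A multigraph is `(k,ℓ)`-tight if it is `(k,ℓ)`-sparse and has exactly `k|V| - ℓ` edges. -/
def Tight {V : Type*} [Fintype V] [DecidableEq V] (k l : ℤ) (E : Multiset (Sym2 V)) : Prop :=
  Sparse k l E ∧ (Multiset.card E : ℤ) = k * (Fintype.card V) - l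

lemma exists_pair_aux {V : Type*} [Fintype V] [DecidableEq V] (h : 2 ≤ Fintype.card V)
    (e : Sym2 V) : ∃ S ∈ (Finset.univ : Finset V).powersetCard 2, e ∈ S.sym2 := by
  induction e using Sym2.ind with
  | _ u v =>
    by_cases huv : u = v
    · obtain ⟨w, hw⟩ := Fintype.exists_ne_of_one_lt_card (by omega) u
      refine ⟨{u, w}, ?_, ?_⟩
      · rw [Finset.mem_powersetCard_univ]
        rw [Finset.card_insert_of_notMem (by simpa using (hw.symm)), Finset.card_singleton]
      · rw [Finset.mk_mem_sym2_iff]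
        subst huv
        simp
    · refine ⟨{u, v}, ?_, ?_⟩
      · rw [Finset.mem_powersetCard_univ]
        exact Finset.card_pair huv
      · rw [Finset.mk_mem_sym2_iff]
        simp

lemma card_le_sum_spanCount {V : Type*} [Fintype V] [DecidableEq V] (h : 2 ≤ Fintype.card V)
    (E : Multiset (Sym2 V)) :
    Multiset.card E ≤
      ∑ S ∈ (Finset.univ : Finset V).powersetCard 2,
        (E.filter (fun e => e ∈ S.sym2)).card := by
  induction E using Multiset.induction with
  | empty => simp
  | cons a E ih =>
    have hspan : ∀ S : Finset V,
        ((a ::ₘ E).filter (fun e => e ∈ S.sym2)).card =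
          (if a ∈ S.sym2 then 1 else 0) + (E.filter (fun e => e ∈ S.sym2)).card := by
      intro S
      rw [Multiset.filter_cons, Multiset.card_add]
      split <;> simp
    simp only [hspan, Finset.sum_add_distrib, Multiset.card_cons]
    obtain ⟨S₀, hS₀, haS₀⟩ := exists_pair_aux h a
    have h1 : 1 ≤ ∑ S ∈ (Finset.univ : Finset V).powersetCard 2,
        (if a ∈ S.sym2 then 1 else 0) := by
      have := Finset.single_le_sum (f := fun S : Finset V => if a ∈ S.sym2 then 1 else 0)
        (fun i _ => Nat.zero_le _) hS₀
      simpa [haS₀] using this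
    omega

/-- In the Szegő range `⌈3k/2⌉ ≤ ℓ < 2k`, there is no `(k,ℓ)`-tight multigraph on `n`
vertices when `n ≥ 3` and `n·(2k - ℓ) < ℓ`. -/
theorem stmt2 (k l n : ℤ) (hszego : 3 * k ≤ 2 * l) (hupper : l < 2 * k)
    (hn3 : 3 ≤ n) (hsmall : n * (2 * k - l) < l)
    (V : Type*) [Fintype V] [DecidableEq V] (hcard : (Fintype.card V : ℤ) = n)
    (E : Multiset (Sym2 V)) : ¬ Tight k l E := by
  rintro ⟨hsp, hE⟩
  have hk : 0 < k := by linarith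
  have hn3' : 3 ≤ Fintype.card V := by exact_mod_cast hcard ▸ hn3
  have h2 : 2 ≤ Fintype.card V := by omega
  set P := (Finset.univ : Finset V).powersetCard 2 with hP
  have hcardP : P.card = (Fintype.card V).choose 2 := by
    rw [hP, Finset.card_powersetCard, Finset.card_univ]
  have h1 : (Multiset.card E : ℤ) ≤ ∑ S ∈ P, (spanCount E S : ℤ) := by
    exact_mod_cast card_le_sum_spanCount h2 E
  have hbound : ∀ S ∈ P, (spanCount E S : ℤ) ≤ 2 * k - l := by
    intro S hS
    have hS2 : S.card = 2 := (Finset.mem_powersetCard_univ.mp hS)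
    have := hsp S
    rw [hS2] at this
    have : (spanCount E S : ℤ) ≤ max 0 (k * 2 - l) := by exact_mod_cast this
    have hpos : (0:ℤ) ≤ k * 2 - l := by linarith
    rw [max_eq_right hpos] at this
    linarith
  have h2' : ∑ S ∈ P, (spanCount E S : ℤ) ≤ (P.card : ℤ) * (2 * k - l) := by
    calc ∑ S ∈ P, (spanCount E S : ℤ) ≤ ∑ _S ∈ P, (2 * k - l) :=
          Finset.sum_le_sum hbound
      _ = (P.card : ℤ) * (2 * k - l) := by rw [Finset.sum_const, nsmul_eq_mul]
  have hchoose : 2 * ((Fintype.card V).choose 2 : ℤ) = n * (n - 1) := by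
    have := Nat.choose_two_right (Fintype.card V)
    have heven : 2 ∣ Fintype.card V * (Fintype.card V - 1) :=
      (Nat.even_mul_pred_self (Fintype.card V)).two_dvd
    have h' : 2 * ((Fintype.card V).choose 2) = Fintype.card V * (Fintype.card V - 1) := by
      rw [this, Nat.mul_div_cancel' heven]
    have := congrArg (fun x : ℕ => (x : ℤ)) h'
    push_cast [Nat.cast_sub (by omega : 1 ≤ Fintype.card V)] at this
    rw [hcard] at this
    linarith
  rw [hcardP] at h2'
  have hfinal : 2 * (k * n - l) ≤ n * (n - 1) * (2 * k - l) := by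
    rw [hE, hcard] at h1
    nlinarith [h1, h2', hchoose]
  nlinarith [hfinal, hsmall, hn3, mul_pos (by linarith : (0:ℤ) < n - 2) (by linarith : (0:ℤ) < l - n * (2 * k - l))]
end

section
/- Let k and ℓ be integers with 0 < 2k − ℓ, and suppose n₀ := ℓ/(2k − ℓ) is an integer with n₀ ≥ 3. Then a multigraph on a vertex set V of cardinality n₀ is (k,ℓ)-tight if and only if it is the complete loopless multigraph K_{n₀}^{2k−ℓ}, i.e., it has no loops and every pair of distinct vertices of V is joined by exactly 2k − ℓ parallel edges. -/
open Finset

lemma two_mul_choose_two_cast (n : ℕ) : 2 * (n.choose 2 : ℤ) = n * (n - 1) := by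
  have h : ((2 * n.choose 2 : ℤ) : ℚ) = ((n * (n - 1) : ℤ) : ℚ) := by
    push_cast [Nat.cast_choose_two]; ring
  exact_mod_cast h

section Arithmetic

variable {k l n₀ : ℤ}

lemma choose_two_mul_eq_of_eq_mul (hint : l = n₀ * (2 * k - l)) {n : ℕ} (hn : (n : ℤ) = n₀) :
    (n.choose 2 : ℤ) * (2 * k - l) = k * n - l := by
  subst hn
  have h := two_mul_choose_two_cast n
  linarith [show 2 * ((n.choose 2 : ℤ) * (2 * k - l)) = 2 * (k * n - l) by
    linear_combination (2 - n : ℤ) * hint + (2 * k - l) * h]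

lemma choose_two_mul_le_max_of_le (hpos : 0 < 2 * k - l) (hint : l = n₀ * (2 * k - l))
    {s : ℕ} (hs : (s : ℤ) ≤ n₀) :
    (s.choose 2 : ℤ) * (2 * k - l) ≤ max 0 (k * s - l) := by
  rcases le_or_gt s 1 with hs1 | hs2
  · simp [Nat.choose_eq_zero_of_lt (show s < 2 by omega)]
  · have hslack : 2 * (k * s - l) - 2 * ((s.choose 2 : ℤ) * (2 * k - l)) =
        (2 * k - l) * (s - 2) * (n₀ - s) := by
      linear_combination (s - 2 : ℤ) * hint - (2 * k - l) * two_mul_choose_two_cast s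
    have hgap : 0 ≤ (2 * k - l) * (s - 2) * (n₀ - s) :=
      mul_nonneg (mul_nonneg hpos.le (by linarith [show (2 : ℤ) ≤ s by exact_mod_cast hs2]))
        (by linarith)
    exact le_max_of_le_right (by linarith)

end Arithmetic

section Multigraph

variable {V : Type*} [DecidableEq V] {E : Multiset (Sym2 V)}

lemma spanCount_eq_sum_count (E : Multiset (Sym2 V)) (S : Finset V) :
    spanCount E S = ∑ e ∈ S.sym2, E.count e := by
  rw [spanCount, ← Multiset.sum_count_eq_card fun e he => (Multiset.mem_filter.1 he).2]
  exact sum_congr rfl fun e he => Multiset.count_filter_of_pos he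

lemma spanCount_univ [Fintype V] (E : Multiset (Sym2 V)) :
    spanCount E univ = Multiset.card E := by
  simp [spanCount]

lemma count_le_spanCount {S : Finset V} {u v : V} (hu : u ∈ S) (hv : v ∈ S) :
    E.count s(u, v) ≤ spanCount E S := by
  rw [spanCount_eq_sum_count]
  exact single_le_sum (f := fun e => E.count e) (fun _ _ => Nat.zero_le _)
    (mk_mem_sym2_iff.2 ⟨hu, hv⟩)

lemma count_eq_zero_of_isDiag (hloop : ∀ v, s(v, v) ∉ E) {e : Sym2 V} (he : e.IsDiag) :
    E.count e = 0 := by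
  rw [← Sym2.diag_diagElem he]
  exact Multiset.count_eq_zero.2 (hloop _)

lemma spanCount_eq_sum_count_not_isDiag (hloop : ∀ v, s(v, v) ∉ E) (S : Finset V) :
    spanCount E S = ∑ e ∈ S.sym2 with ¬e.IsDiag, E.count e := by
  rw [spanCount_eq_sum_count, sum_filter_of_ne]
  intro e _ hne
  by_contra hdiag
  exact hne (count_eq_zero_of_isDiag hloop hdiag)

lemma card_sym2_filter_not_isDiag (S : Finset V) : #{e ∈ S.sym2 | ¬e.IsDiag} = (#S).choose 2 := by
  rw [sym2_eq_image, Sym2.filter_image_mk_not_isDiag, Sym2.card_image_offDiag]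

lemma count_eq_of_not_isDiag {m : ℤ} (hcount : ∀ u v, u ≠ v → (E.count s(u, v) : ℤ) = m)
    {e : Sym2 V} (he : ¬e.IsDiag) : (E.count e : ℤ) = m := by
  induction e using Sym2.ind with
  | _ u v => exact hcount u v (Sym2.mk_isDiag_iff.not.1 he)

lemma spanCount_eq_choose_two_mul (hloop : ∀ v, s(v, v) ∉ E) {m : ℤ}
    (hcount : ∀ u v, u ≠ v → (E.count s(u, v) : ℤ) = m) (S : Finset V) :
    (spanCount E S : ℤ) = ((#S).choose 2 : ℤ) * m := by
  rw [spanCount_eq_sum_count_not_isDiag hloop, Nat.cast_sum,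
    sum_congr rfl fun e he => count_eq_of_not_isDiag hcount (mem_filter.1 he).2,
    sum_const, card_sym2_filter_not_isDiag, nsmul_eq_mul]

lemma count_eq_of_count_le_of_card_eq [Fintype V] (hloop : ∀ v, s(v, v) ∉ E) {m : ℤ}
    (hle : ∀ u v, u ≠ v → (E.count s(u, v) : ℤ) ≤ m)
    (hcard : (Multiset.card E : ℤ) = ((Fintype.card V).choose 2 : ℤ) * m)
    {u v : V} (huv : u ≠ v) : (E.count s(u, v) : ℤ) = m := by
  have hle' : ∀ e ∈ (univ : Finset V).sym2.filter (fun e => ¬e.IsDiag), (E.count e : ℤ) ≤ m := by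
    intro e he
    induction e using Sym2.ind with
    | _ a b => exact hle a b (Sym2.mk_isDiag_iff.not.1 (mem_filter.1 he).2)
  have hsum : ∑ e ∈ (univ : Finset V).sym2 with ¬e.IsDiag, (E.count e : ℤ) =
      ∑ e ∈ (univ : Finset V).sym2 with ¬e.IsDiag, m := by
    rw [sum_const, card_sym2_filter_not_isDiag, card_univ, nsmul_eq_mul, ← hcard,
      ← spanCount_univ, spanCount_eq_sum_count_not_isDiag hloop, Nat.cast_sum]
  exact (sum_eq_sum_iff_of_le hle').1 hsum s(u, v)
    (mem_filter.2 ⟨mk_mem_sym2_iff.2 ⟨mem_univ u, mem_univ v⟩, Sym2.mk_isDiag_iff.not.2 huv⟩)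

end Multigraph

namespace Sparse

variable {V : Type*} [Fintype V] [DecidableEq V] {k l : ℤ} {E : Multiset (Sym2 V)}

lemma loopless (h : Sparse k l E) (hkl : k ≤ l) (v : V) : s(v, v) ∉ E := by
  intro hv
  have hspan := h {v}
  have hpos : 0 < spanCount E {v} := (Multiset.count_pos.2 hv).trans_le
    (count_le_spanCount (mem_singleton_self v) (mem_singleton_self v))
  rw [card_singleton, Nat.cast_one, mul_one, max_eq_left (by linarith)] at hspan
  omega

lemma count_le (h : Sparse k l E) (hkl : 0 ≤ 2 * k - l) {u v : V} (huv : u ≠ v) :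
    (E.count s(u, v) : ℤ) ≤ 2 * k - l := by
  have hspan := h {u, v}
  rw [card_pair huv, Nat.cast_two, mul_comm k, max_eq_right hkl] at hspan
  have hsub : E.count s(u, v) ≤ spanCount E {u, v} :=
    count_le_spanCount (mem_insert_self u {v}) (mem_insert_of_mem (mem_singleton_self v))
  exact le_trans (by exact_mod_cast hsub) hspan

end Sparse

/-- If `2k - ℓ > 0` and `n₀ := ℓ/(2k-ℓ)` is an integer with `n₀ ≥ 3`, then a multigraph on
`n₀` vertices is `(k,ℓ)`-tight iff it is the complete loopless multigraph `K_{n₀}^{2k-ℓ}`: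
no loops, and every pair of distinct vertices is joined by exactly `2k - ℓ` parallel edges. -/
theorem stmt3 (k l n₀ : ℤ) (hpos : 0 < 2 * k - l) (hint : l = n₀ * (2 * k - l))
    (hn : 3 ≤ n₀) (V : Type*) [Fintype V] [DecidableEq V]
    (hcard : (Fintype.card V : ℤ) = n₀) (E : Multiset (Sym2 V)) :
    Tight k l E ↔
      ((∀ v : V, s(v, v) ∉ E) ∧
        ∀ u v : V, u ≠ v → (E.count s(u, v) : ℤ) = 2 * k - l) := by
  have htotal := choose_two_mul_eq_of_eq_mul hint hcard
  constructor
  · rintro ⟨hsparse, hcardE⟩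
    have hkl : k ≤ l := by nlinarith
    have hloop := hsparse.loopless hkl
    refine ⟨hloop, fun u v huv => count_eq_of_count_le_of_card_eq hloop
      (fun a b hab => hsparse.count_le hpos.le hab) ?_ huv⟩
    rw [hcardE, htotal]
  · rintro ⟨hloop, hcount⟩
    refine ⟨fun S => ?_, ?_⟩
    · rw [spanCount_eq_choose_two_mul hloop hcount]
      exact choose_two_mul_le_max_of_le hpos hint
        (by rw [← hcard]; exact_mod_cast card_le_univ S)
    · rw [← spanCount_univ, spanCount_eq_choose_two_mul hloop hcount, card_univ, htotal]
end

section
/- (Basis exchange for the (k,ℓ)-sparsity matroid.) Let k, ℓ be integers with k ≥ 1 and 0 ≤ ℓ < 2k, and let V be a finite vertex set whose cardinality n satisfies: n ≥ 1 if ℓ ≤ k; n ≥ 2 if k < ℓ and 2ℓ < 3k; and n = 2 or n·(2k − ℓ) ≥ ℓ if 3k ≤ 2ℓ. Let E₁ and E₂ be edge multisets on V such that (V, E₁) and (V, E₂) are both (k,ℓ)-tight, and let e₂ be an edge in the multiset difference E₂ − E₁. Then there exists an edge e₁ in the multiset difference E₁ − E₂ such that (V, E₁ − {e₁} + {e₂})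 is (k,ℓ)-tight. -/
private lemma spanCount_submod {V : Type*} [DecidableEq V] (E : Multiset (Sym2 V))
    (A B : Finset V) :
    spanCount E A + spanCount E B ≤ spanCount E (A ∪ B) + spanCount E (A ∩ B) := by
  simp only [spanCount, ← Multiset.countP_eq_card_filter]
  induction E using Multiset.induction_on with
  | empty => simp
  | cons a s ih =>
    simp only [Multiset.countP_cons]
    have h1 : a ∈ A.sym2 → a ∈ (A ∪ B).sym2 := fun h => Finset.sym2_mono Finset.subset_union_left h
    have h2 : a ∈ B.sym2 → a ∈ (A ∪ B).sym2 := fun h => Finset.sym2_mono Finset.subset_union_right h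
    have h3 : a ∈ A.sym2 → a ∈ B.sym2 → a ∈ (A ∩ B).sym2 := by
      simp only [Finset.mem_sym2_iff]
      intro hA hB y hy
      exact Finset.mem_inter.mpr ⟨hA y hy, hB y hy⟩
    split_ifs <;> simp_all <;> omega

private lemma spanCount_pos {V : Type*} [DecidableEq V] {E : Multiset (Sym2 V)} {S : Finset V}
    {e : Sym2 V} (heE : e ∈ E) (heS : e ∈ S.sym2) : 1 ≤ spanCount E S := by
  have : e ∈ E.filter (fun e => e ∈ S.sym2) := Multiset.mem_filter.mpr ⟨heE, heS⟩
  exact Multiset.card_pos.mpr (fun h => by simp [h] at this)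

/-- Basis exchange for the `(k,ℓ)`-sparsity matroid: if `E₁` and `E₂` are both `(k,ℓ)`-tight
on the same admissible vertex set and `e₂ ∈ E₂ - E₁`, then there is `e₁ ∈ E₁ - E₂` such that
`E₁ - {e₁} + {e₂}` is `(k,ℓ)`-tight. -/
theorem stmt5 (k l : ℤ) (hk : 1 ≤ k) (hl0 : 0 ≤ l) (hl2 : l < 2 * k)
    (V : Type*) [Fintype V] [DecidableEq V]
    (hn1 : l ≤ k → 1 ≤ Fintype.card V)
    (hn2 : k < l → 2 * l < 3 * k → 2 ≤ Fintype.card V)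
    (hn3 : 3 * k ≤ 2 * l →
      Fintype.card V = 2 ∨ l ≤ (Fintype.card V : ℤ) * (2 * k - l))
    (E₁ E₂ : Multiset (Sym2 V)) (h1 : Tight k l E₁) (h2 : Tight k l E₂)
    (e₂ : Sym2 V) (he₂ : e₂ ∈ E₂ - E₁) :
    ∃ e₁ ∈ E₁ - E₂, Tight k l (E₁ - {e₁} + {e₂}) := by
  classical
  obtain ⟨h1s, h1c⟩ := h1
  obtain ⟨h2s, h2c⟩ := h2
  -- basic facts about e₂
  have hcnt : Multiset.count e₂ E₁ < Multiset.count e₂ E₂ := by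
    have := Multiset.count_pos.mpr he₂
    rw [Multiset.count_sub] at this
    omega
  have he₂E₂ : e₂ ∈ E₂ := Multiset.count_pos.mp (by omega)
  -- the family of E₁-tight sets containing e₂
  set P : Finset V → Prop := fun S => (spanCount E₁ S : ℤ) = k * S.card - l ∧ e₂ ∈ S.sym2
    with hP
  -- any set containing e₂ has k|S| - l ≥ 1 (via E₂-sparsity)
  have hpos : ∀ S : Finset V, e₂ ∈ S.sym2 → 1 ≤ k * (S.card : ℤ) - l := by
    intro S hS
    have h1' : (1 : ℤ) ≤ spanCount E₂ S := by exact_mod_cast spanCount_pos he₂E₂ hS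
    have := h2s S
    rcases le_or_gt (k * (S.card : ℤ) - l) 0 with h | h
    · rw [max_eq_left h] at this; omega
    · omega
  -- V (univ) is in the family
  have hPuniv : P Finset.univ := by
    constructor
    · have : E₁.filter (fun e => e ∈ (Finset.univ : Finset V).sym2) = E₁ := by
        apply Multiset.filter_eq_self.mpr
        intro e _
        simp [Finset.mem_sym2_iff]
      simp only [spanCount, this, Finset.card_univ]
      exact h1c
    · simp [Finset.mem_sym2_iff]
  -- the family is closed under intersection
  have hinter : ∀ A B : Finset V, P A → P B → P (A ∩ B) := by
    intro A B ⟨hA, hAe⟩ ⟨hB, hBe⟩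
    have hABe : e₂ ∈ (A ∩ B).sym2 := by
      simp only [Finset.mem_sym2_iff] at hAe hBe ⊢
      exact fun y hy => Finset.mem_inter.mpr ⟨hAe y hy, hBe y hy⟩
    refine ⟨?_, hABe⟩
    have hsub := spanCount_submod E₁ A B
    have hU := h1s (A ∪ B)
    have hI := h1s (A ∩ B)
    have hUc : ((A ∪ B).card : ℤ) + ((A ∩ B).card : ℤ) = A.card + B.card := by
      have := Finset.card_union_add_card_inter A B
      exact_mod_cast congrArg (Nat.cast : ℕ → ℤ) this
    have hkUc : k * ((A ∪ B).card : ℤ) + k * ((A ∩ B).card : ℤ)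
        = k * A.card + k * B.card := by linear_combination k * hUc
    have hIpos : 1 ≤ k * ((A ∩ B).card : ℤ) - l := hpos _ hABe
    have hApos : (0 : ℤ) ≤ k * A.card - l := hA ▸ Int.natCast_nonneg _
    have hUmax : max 0 (k * ((A ∪ B).card : ℤ) - l) = k * ((A ∪ B).card : ℤ) - l := by
      have hAU : (A.card : ℤ) ≤ (A ∪ B).card := by
        exact_mod_cast Finset.card_le_card (Finset.subset_union_left (s₁ := A) (s₂ := B))
      have : (0 : ℤ) ≤ k * ((A ∪ B).card : ℤ) - l := by nlinarith
      exact max_eq_right this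
    rw [hUmax] at hU
    rw [max_eq_right (by omega)] at hI
    have hsub' : (spanCount E₁ A : ℤ) + spanCount E₁ B ≤
        (spanCount E₁ (A ∪ B) : ℤ) + spanCount E₁ (A ∩ B) := by exact_mod_cast hsub
    omega
  -- pick a minimum-cardinality member T₀ of the family
  obtain ⟨T₀, hT₀mem, hT₀min⟩ :=
    Finset.exists_min_image (Finset.univ.filter P) Finset.card
      ⟨Finset.univ, Finset.mem_filter.mpr ⟨Finset.mem_univ _, hPuniv⟩⟩
  have hT₀ : P T₀ := (Finset.mem_filter.mp hT₀mem).2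
  have hT₀sub : ∀ S : Finset V, P S → T₀ ⊆ S := by
    intro S hS
    have hPI := hinter T₀ S hT₀ hS
    have hle := hT₀min (T₀ ∩ S) (Finset.mem_filter.mpr ⟨Finset.mem_univ _, hPI⟩)
    have : T₀ ∩ S = T₀ :=
      Finset.eq_of_subset_of_card_le Finset.inter_subset_left (by omega)
    intro x hx
    exact Finset.mem_inter.mp (this ▸ hx) |>.2
  obtain ⟨hT₀span, hT₀e⟩ := hT₀
  -- counting argument inside T₀ to find e₁
  set A : Multiset (Sym2 V) := E₁.filter (fun e => e ∈ T₀.sym2) with hA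
  set B : Multiset (Sym2 V) := E₂.filter (fun e => e ∈ T₀.sym2) with hB
  have hcardBA : Multiset.card B ≤ Multiset.card A := by
    have h2' := h2s T₀
    rw [max_eq_right (by have := hpos T₀ hT₀e; omega)] at h2'
    have : (Multiset.card B : ℤ) ≤ Multiset.card A := by
      rw [← spanCount, ← spanCount] at *
      omega
    exact_mod_cast this
  have hcntBA : Multiset.count e₂ A < Multiset.count e₂ B := by
    rw [hA, hB, Multiset.count_filter, Multiset.count_filter, if_pos hT₀e, if_pos hT₀e]
    exact hcnt
  have hABsub : Multiset.card (A - B) + Multiset.card (A ∩ B) = Multiset.card A := by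
    rw [← Multiset.card_add, Multiset.sub_add_inter]
  have hBAsub : Multiset.card (B - A) + Multiset.card (B ∩ A) = Multiset.card B := by
    rw [← Multiset.card_add, Multiset.sub_add_inter]
  have hBApos : 1 ≤ Multiset.card (B - A) := by
    apply Multiset.card_pos.mpr
    intro h
    have : e₂ ∈ B - A := by
      rw [← Multiset.count_pos, Multiset.count_sub]; omega
    simp [h] at this
  have hIeq : Multiset.card (B ∩ A) = Multiset.card (A ∩ B) := by
    rw [Multiset.inter_comm]
  obtain ⟨e₁, he₁AB⟩ : ∃ e₁, e₁ ∈ A - B := by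
    apply Multiset.exists_mem_of_ne_zero
    intro h
    rw [h] at hABsub
    simp at hABsub
    omega
  have he₁cnt : Multiset.count e₁ B < Multiset.count e₁ A := by
    have := Multiset.count_pos.mpr he₁AB
    rw [Multiset.count_sub] at this
    omega
  have he₁A : e₁ ∈ A := Multiset.count_pos.mp (by omega)
  have he₁T₀ : e₁ ∈ T₀.sym2 := (Multiset.mem_filter.mp he₁A).2
  have he₁E₁cnt : Multiset.count e₁ E₂ < Multiset.count e₁ E₁ := by
    have h1 : Multiset.count e₁ A = Multiset.count e₁ E₁ := by
      rw [hA, Multiset.count_filter, if_pos he₁T₀]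
    have h2 : Multiset.count e₁ B = Multiset.count e₁ E₂ := by
      rw [hB, Multiset.count_filter, if_pos he₁T₀]
    omega
  have he₁E₁ : e₁ ∈ E₁ := Multiset.count_pos.mp (by omega)
  refine ⟨e₁, ?_, ?_, ?_⟩
  · rw [← Multiset.count_pos, Multiset.count_sub]; omega
  · -- sparsity of E₁ - {e₁} + {e₂}
    intro S
    have hfilt : spanCount (E₁ - {e₁} + {e₂}) S =
        spanCount E₁ S - spanCount {e₁} S + spanCount {e₂} S := by
      simp only [spanCount, Multiset.filter_add, Multiset.filter_sub, Multiset.card_add]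
      congr 1
      apply Multiset.card_sub
      exact Multiset.filter_le_filter _ (Multiset.singleton_le.mpr he₁E₁)
    have hs1 : spanCount ({e₁} : Multiset (Sym2 V)) S = if e₁ ∈ S.sym2 then 1 else 0 := by
      simp only [spanCount, Multiset.filter_singleton]
      split_ifs <;> simp
    have hs2 : spanCount ({e₂} : Multiset (Sym2 V)) S = if e₂ ∈ S.sym2 then 1 else 0 := by
      simp only [spanCount, Multiset.filter_singleton]
      split_ifs <;> simp
    have hE₁S := h1s S
    by_cases h2S : e₂ ∈ S.sym2
    · by_cases h1S : e₁ ∈ S.sym2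
      · have hge : 1 ≤ spanCount E₁ S := spanCount_pos he₁E₁ h1S
        rw [hfilt, hs1, hs2, if_pos h1S, if_pos h2S]
        have : spanCount E₁ S - 1 + 1 = spanCount E₁ S := by omega
        rw [this]
        exact hE₁S
      · -- e₂ ∈ S, e₁ ∉ S: S cannot be tight, else T₀ ⊆ S would force e₁ ∈ S
        rw [hfilt, hs1, hs2, if_neg h1S, if_pos h2S]
        have hmax : max 0 (k * (S.card : ℤ) - l) = k * S.card - l :=
          max_eq_right (by have := hpos S h2S; omega)
        rw [hmax] at hE₁S ⊢
        rcases lt_or_eq_of_le hE₁S with h | h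
        · push_cast; omega
        · exfalso
          exact h1S (Finset.sym2_mono (hT₀sub S ⟨h, h2S⟩) he₁T₀)
    · -- e₂ ∉ S: span can only decrease
      rw [hfilt, hs1, hs2, if_neg h2S]
      have : spanCount E₁ S - (if e₁ ∈ S.sym2 then 1 else 0) + 0 ≤ spanCount E₁ S := by
        split_ifs <;> omega
      calc ((spanCount E₁ S - (if e₁ ∈ S.sym2 then 1 else 0) + 0 : ℕ) : ℤ)
          ≤ (spanCount E₁ S : ℤ) := by exact_mod_cast this
        _ ≤ _ := hE₁S
  · -- cardinality
    rw [Multiset.card_add, Multiset.card_sub (Multiset.singleton_le.mpr he₁E₁),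
      Multiset.card_singleton, Multiset.card_singleton]
    have hge : 1 ≤ Multiset.card E₁ := Multiset.card_pos.mpr (fun h => by simp [h] at he₁E₁)
    have heq : Multiset.card E₁ - 1 + 1 = Multiset.card E₁ := by omega
    rw [heq]; exact h1c
end

section
/- Let k, ℓ be integers with 0 ≤ ℓ < 2k and let G = (V, E) be a (k,ℓ)-tight multigraph. Let {V₁, …, V_p} be a partition of V into p nonempty parts; if ℓ > k, assume additionally that every part satisfies |V_i| ≥ 2. Then the number of edges of E (counted with multiplicity) whose two endpoints lie in different parts is at least ℓ·(p − 1). -/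
private lemma aux_card_exists {V : Type*} [DecidableEq V] (E : Multiset (Sym2 V))
    (s : Finset (Finset V)) :
    (E.filter (fun e => ∃ t ∈ s, e ∈ t.sym2)).card ≤ ∑ t ∈ s, spanCount E t := by
  classical
  induction s using Finset.induction with
  | empty => simp [Multiset.filter_eq_nil]
  | @insert a s ha ih =>
    have h1 : (E.filter (fun e => ∃ t ∈ insert a s, e ∈ t.sym2))
        = E.filter (fun e => e ∈ a.sym2 ∨ ∃ t ∈ s, e ∈ t.sym2) := by
      apply Multiset.filter_congr
      intro e _
      simp [Finset.exists_mem_insert]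
    have h2 : (E.filter (fun e => e ∈ a.sym2 ∨ ∃ t ∈ s, e ∈ t.sym2)).card
        ≤ (E.filter (fun e => e ∈ a.sym2)).card
          + (E.filter (fun e => ∃ t ∈ s, e ∈ t.sym2)).card := by
      have := Multiset.filter_add_filter (fun e => e ∈ a.sym2)
        (fun e => ∃ t ∈ s, e ∈ t.sym2) E
      have hcard := congrArg Multiset.card this
      simp only [Multiset.card_add] at hcard
      omega
    rw [h1, Finset.sum_insert ha]
    exact h2.trans (Nat.add_le_add_left ih _)

/-- In a `(k,ℓ)`-tight multigraph, any partition of the vertex set into `p` parts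
(each of size at least 2 when `ℓ > k`) has at least `ℓ(p-1)` edges between the parts. -/
theorem stmt6 (k l : ℤ) (hl0 : 0 ≤ l) (hl2 : l < 2 * k)
    {V : Type*} [Fintype V] [DecidableEq V]
    (E : Multiset (Sym2 V)) (hT : Tight k l E)
    (P : Finpartition (Finset.univ : Finset V))
    (hbig : k < l → ∀ t ∈ P.parts, 2 ≤ t.card) :
    l * ((P.parts.card : ℤ) - 1) ≤
      ((E.filter (fun e => ∀ t ∈ P.parts, e ∉ t.sym2)).card : ℤ) := by
  classical
  obtain ⟨hS, hE⟩ := hT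
  have hk : 1 ≤ k := by omega
  -- each part has l ≤ k * |t|
  have hpart : ∀ t ∈ P.parts, l ≤ k * (t.card : ℤ) := by
    intro t ht
    have h1 : 1 ≤ (t.card : ℤ) := by
      have := P.nonempty_of_mem_parts ht
      exact_mod_cast Finset.Nonempty.card_pos this
    by_cases hkl : k < l
    · have h2 : 2 ≤ (t.card : ℤ) := by exact_mod_cast hbig hkl t ht
      nlinarith
    · push_neg at hkl
      nlinarith
  -- spanCount bound
  have hspan : ∀ t ∈ P.parts, (spanCount E t : ℤ) ≤ k * t.card - l := by
    intro t ht
    have := hS t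
    have h0 : (0 : ℤ) ≤ k * t.card - l := by linarith [hpart t ht]
    rwa [max_eq_right h0] at this
  have hsum : (∑ t ∈ P.parts, (spanCount E t : ℤ))
      ≤ k * (Fintype.card V) - l * P.parts.card := by
    calc (∑ t ∈ P.parts, (spanCount E t : ℤ))
        ≤ ∑ t ∈ P.parts, (k * t.card - l) := Finset.sum_le_sum hspan
      _ = k * (∑ t ∈ P.parts, (t.card : ℤ)) - l * P.parts.card := by
          rw [Finset.sum_sub_distrib, Finset.mul_sum]
          simp [mul_comm]
      _ = k * (Fintype.card V) - l * P.parts.card := by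
          congr 1
          have := P.sum_card_parts
          have : (∑ t ∈ P.parts, (t.card : ℤ)) = ((Finset.univ : Finset V).card : ℤ) := by
            exact_mod_cast congrArg (Nat.cast : ℕ → ℤ) this
          rw [this, Finset.card_univ]
  -- split E
  have hsplit : (E.filter (fun e => ∀ t ∈ P.parts, e ∉ t.sym2)).card
      + (E.filter (fun e => ∃ t ∈ P.parts, e ∈ t.sym2)).card = Multiset.card E := by
    have h1 : E.filter (fun e => ∃ t ∈ P.parts, e ∈ t.sym2)
        = E.filter (fun e => ¬ ∀ t ∈ P.parts, e ∉ t.sym2) := by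
      apply Multiset.filter_congr
      intro e _
      push_neg
      rfl
    rw [h1]
    have := Multiset.filter_add_not (fun e => ∀ t ∈ P.parts, e ∉ t.sym2) E
    have hcard := congrArg Multiset.card this
    simpa [Multiset.card_add] using hcard
  have haux : ((E.filter (fun e => ∃ t ∈ P.parts, e ∈ t.sym2)).card : ℤ)
      ≤ ∑ t ∈ P.parts, (spanCount E t : ℤ) := by
    have := aux_card_exists E P.parts
    exact_mod_cast this
  have hsplit' : ((E.filter (fun e => ∀ t ∈ P.parts, e ∉ t.sym2)).card : ℤ)
      + ((E.filter (fun e => ∃ t ∈ P.parts, e ∈ t.sym2)).card : ℤ)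
      = (Multiset.card E : ℤ) := by exact_mod_cast hsplit
  linarith [hsplit', haux, hsum, hE]
end

section
/- (Block intersection.) Let k, ℓ be integers with 0 ≤ ℓ < 2k, let G = (V, E) be a (k,ℓ)-sparse multigraph, and let V₁, V₂ ⊆ V be blocks of G. Assume |V₁ ∩ V₂| ≥ 1 if ℓ ≤ k, and |V₁ ∩ V₂| ≥ 2 if ℓ > k. Then V₁ ∩ V₂ and V₁ ∪ V₂ are both blocks of G; that is, span(V₁ ∩ V₂) = k|V₁ ∩ V₂| − ℓ and span(V₁ ∪ V₂) = k|V₁ ∪ V₂| − ℓ. -/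
/-- A block of a `(k,ℓ)`-sparse multigraph is a vertex subset spanning exactly
`k|S| - ℓ` edges. -/
def IsBlock {V : Type*} [DecidableEq V] (k l : ℤ) (E : Multiset (Sym2 V))
    (S : Finset V) : Prop :=
  (spanCount E S : ℤ) = k * S.card - l

/-- A component is a block that is maximal under inclusion of vertex sets. -/
def IsComponent {V : Type*} [DecidableEq V] (k l : ℤ) (E : Multiset (Sym2 V))
    (S : Finset V) : Prop :=
  IsBlock k l E S ∧ ∀ T : Finset V, IsBlock k l E T → S ⊆ T → S = T

/-- Block intersection: in a `(k,ℓ)`-sparse multigraph, if two blocks intersect in at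
least one vertex (lower range `ℓ ≤ k`), resp. two vertices (upper range `ℓ > k`), then
their intersection and union are also blocks. -/
theorem stmt9 (k l : ℤ) (hl0 : 0 ≤ l) (hl2 : l < 2 * k)
    {V : Type*} [Fintype V] [DecidableEq V]
    (E : Multiset (Sym2 V)) (hS : Sparse k l E)
    (V₁ V₂ : Finset V) (hB1 : IsBlock k l E V₁) (hB2 : IsBlock k l E V₂)
    (hlow : l ≤ k → 1 ≤ (V₁ ∩ V₂).card)
    (hup : k < l → 2 ≤ (V₁ ∩ V₂).card) :
    IsBlock k l E (V₁ ∩ V₂) ∧ IsBlock k l E (V₁ ∪ V₂) := by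

  classical
  have hk : 0 < k := by linarith
  -- supermodularity
  have key : spanCount E V₁ + spanCount E V₂ ≤
      spanCount E (V₁ ∩ V₂) + spanCount E (V₁ ∪ V₂) := by
    unfold spanCount
    rw [← Multiset.card_add, ← Multiset.card_add, Multiset.filter_add_filter]
    have h1 : (E.filter fun e => e ∈ V₁.sym2 ∧ e ∈ V₂.sym2) =
        E.filter (fun e => e ∈ (V₁ ∩ V₂).sym2) := by
      apply Multiset.filter_congr
      intro e _
      simp [Finset.mem_sym2_iff, Finset.mem_inter, forall_and]
    have h2 : (E.filter fun e => e ∈ V₁.sym2 ∨ e ∈ V₂.sym2) ≤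
        E.filter (fun e => e ∈ (V₁ ∪ V₂).sym2) := by
      apply Multiset.monotone_filter_right
      intro e he
      simp only [Finset.mem_sym2_iff, Finset.mem_union] at *
      rcases he with h | h
      · exact fun y hy => Or.inl (h y hy)
      · exact fun y hy => Or.inr (h y hy)
    rw [h1]
    simp only [Multiset.card_add]
    have := Multiset.card_le_card h2
    omega
  have hc1 : 1 ≤ (V₁ ∩ V₂).card := by
    rcases le_or_gt l k with h | h
    · exact hlow h
    · exact le_trans one_le_two (hup h)
  have hInt : 0 ≤ k * ((V₁ ∩ V₂).card : ℤ) - l := by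
    rcases le_or_gt l k with h | h
    · have : (1 : ℤ) ≤ ((V₁ ∩ V₂).card : ℤ) := by exact_mod_cast hc1
      nlinarith
    · have : (2 : ℤ) ≤ ((V₁ ∩ V₂).card : ℤ) := by exact_mod_cast hup h
      nlinarith
  have hsub : (V₁ ∩ V₂).card ≤ (V₁ ∪ V₂).card :=
    Finset.card_le_card (le_trans Finset.inter_subset_left Finset.subset_union_left)
  have hUn : 0 ≤ k * ((V₁ ∪ V₂).card : ℤ) - l := by
    have : ((V₁ ∩ V₂).card : ℤ) ≤ ((V₁ ∪ V₂).card : ℤ) := by exact_mod_cast hsub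
    nlinarith
  have ha := hS (V₁ ∩ V₂)
  have hb := hS (V₁ ∪ V₂)
  rw [max_eq_right hInt] at ha
  rw [max_eq_right hUn] at hb
  have hcard : (V₁ ∩ V₂).card + (V₁ ∪ V₂).card = V₁.card + V₂.card :=
    Finset.card_inter_add_card_union V₁ V₂
  have hcard' : ((V₁ ∩ V₂).card : ℤ) + ((V₁ ∪ V₂).card : ℤ) =
      (V₁.card : ℤ) + (V₂.card : ℤ) := by exact_mod_cast hcard
  have key' : (spanCount E V₁ : ℤ) + spanCount E V₂ ≤
      (spanCount E (V₁ ∩ V₂) : ℤ) + spanCount E (V₁ ∪ V₂) := by exact_mod_cast key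
  have hm : k * ((V₁ ∩ V₂).card : ℤ) + k * ((V₁ ∪ V₂).card : ℤ) =
      k * (V₁.card : ℤ) + k * (V₂.card : ℤ) := by linear_combination k * hcard'
  unfold IsBlock at *
  constructor <;> linarith
end

section
/- Let k, ℓ be integers with 0 < ℓ < 2k, let G = (V, E) be a (k,ℓ)-sparse multigraph, and let V' ⊆ V be a block of G. Then the induced subgraph on V' (with edge multiset consisting of all edges of E whose endpoints both lie in V') is connected. -/
/-- For `0 < ℓ < 2k`, the subgraph induced by a block of a `(k,ℓ)`-sparse multigraph is
connected: every nonempty proper subset `S` of the block `V'` has an induced edge with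
one endpoint in `S` and the other in `V' \ S`. -/
theorem stmt12 (k l : ℤ) (hl0 : 0 < l) (hl2 : l < 2 * k)
    {V : Type*} [Fintype V] [DecidableEq V]
    (E : Multiset (Sym2 V)) (hS : Sparse k l E)
    (V' : Finset V) (hB : IsBlock k l E V')
    (S : Finset V) (hsub : S ⊆ V') (hne : S.Nonempty) (hproper : S ≠ V') :
    ∃ e ∈ E, e ∈ V'.sym2 ∧ ∃ u v : V, e = s(u, v) ∧ u ∈ S ∧ v ∈ V' \ S := by
  by_contra hcon
  push_neg at hcon
  set T := V' \ S with hT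
  have hTne : T.Nonempty := by
    rcases Finset.exists_of_ssubset (hsub.ssubset_of_ne hproper) with ⟨x, hx, hxs⟩
    exact ⟨x, Finset.mem_sdiff.mpr ⟨hx, hxs⟩⟩
  have key : ∀ e ∈ E, e ∈ V'.sym2 → e ∈ S.sym2 ∨ e ∈ T.sym2 := by
    intro e he hev
    induction e using Sym2.ind with
    | _ u v =>
      have hu : u ∈ V' := Finset.mem_sym2_iff.mp hev u (by simp)
      have hv : v ∈ V' := Finset.mem_sym2_iff.mp hev v (by simp)
      by_cases hus : u ∈ S <;> by_cases hvs : v ∈ S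
      · left; rw [Finset.mem_sym2_iff]; intro y hy
        rcases Sym2.mem_iff.mp hy with h | h <;> subst h <;> assumption
      · exact absurd (Finset.mem_sdiff.mpr ⟨hv, hvs⟩) (hcon _ he hev u v rfl hus)
      · exact absurd (Finset.mem_sdiff.mpr ⟨hu, hus⟩)
          (hcon _ he hev v u (Sym2.eq_swap) hvs)
      · right; rw [Finset.mem_sym2_iff]; intro y hy
        rcases Sym2.mem_iff.mp hy with h | h <;> subst h <;>
          exact Finset.mem_sdiff.mpr ⟨by assumption, by assumption⟩
  have hcard : spanCount E V' ≤ spanCount E S + spanCount E T := by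
    unfold spanCount
    set F := E.filter (fun e => e ∈ V'.sym2) with hF
    have hall : ∀ e ∈ F, e ∈ S.sym2 ∨ e ∈ T.sym2 := by
      intro e he
      rcases Multiset.mem_filter.mp he with ⟨h1, h2⟩
      exact key e h1 h2
    have h1 : F = F.filter (fun e => e ∈ S.sym2 ∨ e ∈ T.sym2) :=
      (Multiset.filter_eq_self.mpr hall).symm
    have h2 : (F.filter (fun e => e ∈ S.sym2 ∨ e ∈ T.sym2)).card ≤
        (F.filter (fun e => e ∈ S.sym2)).card + (F.filter (fun e => e ∈ T.sym2)).card := by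
      have := Multiset.filter_add_filter (fun e => e ∈ S.sym2) (fun e => e ∈ T.sym2) F
      have hc := congrArg Multiset.card this
      simp only [Multiset.card_add] at hc
      omega
    have h3 : (F.filter (fun e => e ∈ S.sym2)).card ≤ (E.filter (fun e => e ∈ S.sym2)).card :=
      Multiset.card_le_card (Multiset.filter_le_filter _ (Multiset.filter_le _ E))
    have h4 : (F.filter (fun e => e ∈ T.sym2)).card ≤ (E.filter (fun e => e ∈ T.sym2)).card :=
      Multiset.card_le_card (Multiset.filter_le_filter _ (Multiset.filter_le _ E))
    calc F.card = (F.filter (fun e => e ∈ S.sym2 ∨ e ∈ T.sym2)).card := by rw [← h1]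
      _ ≤ _ := by omega
  have hcardsum : S.card + T.card = V'.card := by
    rw [hT, add_comm]
    exact Finset.card_sdiff_add_card_eq_card hsub
  have hk : (1 : ℤ) ≤ k := by omega
  have hcS : (1 : ℤ) ≤ S.card := by exact_mod_cast hne.card_pos
  have hcT : (1 : ℤ) ≤ T.card := by exact_mod_cast hTne.card_pos
  have haS : k ≤ k * S.card := le_mul_of_one_le_right (by omega) hcS
  have haT : k ≤ k * T.card := le_mul_of_one_le_right (by omega) hcT
  have hsum : k * (V'.card : ℤ) = k * S.card + k * T.card := by
    rw [← mul_add]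
    congr 1
    exact_mod_cast hcardsum.symm
  have hSs := hS S
  have hTs := hS T
  have hB' := hB
  unfold IsBlock at hB'
  have hcard' : (spanCount E V' : ℤ) ≤ (spanCount E S : ℤ) + (spanCount E T : ℤ) := by
    exact_mod_cast hcard
  have hnn : (0 : ℤ) ≤ (spanCount E S : ℤ) := Int.natCast_nonneg _
  have hnn2 : (0 : ℤ) ≤ (spanCount E T : ℤ) := Int.natCast_nonneg _
  have hSd : (spanCount E S : ℤ) ≤ 0 ∨ (spanCount E S : ℤ) ≤ k * S.card - l :=
    le_max_iff.mp hSs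
  have hTd : (spanCount E T : ℤ) ≤ 0 ∨ (spanCount E T : ℤ) ≤ k * T.card - l :=
    le_max_iff.mp hTs
  rw [hsum] at hB'
  generalize k * (S.card : ℤ) = a at *
  generalize k * (T.card : ℤ) = b at *
  omega
end

section
/- Let k, ℓ be integers with 0 ≤ ℓ < 2k, let G = (V, E) be a (k,ℓ)-sparse multigraph, and let u ≠ v be two vertices of V. Then the multigraph (V, E + {uv}) obtained by adding one new edge joining u and v is (k,ℓ)-sparse if and only if there is no block V' of G with u ∈ V' and v ∈ V'. -/
/-- Adding one new edge `uv` (with `u ≠ v`) to a `(k,ℓ)`-sparse multigraph keeps it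
`(k,ℓ)`-sparse if and only if no block contains both `u` and `v`. -/
theorem stmt13 (k l : ℤ) (hl0 : 0 ≤ l) (hl2 : l < 2 * k)
    {V : Type*} [Fintype V] [DecidableEq V]
    (E : Multiset (Sym2 V)) (hS : Sparse k l E)
    (u v : V) (huv : u ≠ v) :
    Sparse k l (E + {s(u, v)}) ↔
      ¬ ∃ S : Finset V, IsBlock k l E S ∧ u ∈ S ∧ v ∈ S := by

  have key : ∀ S : Finset V, spanCount (E + {s(u, v)}) S =
      spanCount E S + (if u ∈ S ∧ v ∈ S then 1 else 0) := by
    intro S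
    simp only [spanCount, Multiset.filter_add, Multiset.card_add]
    congr 1
    by_cases h : u ∈ S ∧ v ∈ S
    · rw [if_pos h]
      rw [Multiset.filter_singleton, if_pos]
      · simp
      · simpa [Finset.mk_mem_sym2_iff] using h
    · rw [if_neg h]
      rw [Multiset.filter_singleton, if_neg]
      · simp
      · simpa [Finset.mk_mem_sym2_iff] using h
  constructor
  · rintro hsp ⟨S, hB, hu, hv⟩
    have h1 := hsp S
    rw [key S, if_pos ⟨hu, hv⟩] at h1
    have h0 : (0:ℤ) ≤ k * S.card - l := by
      rw [← hB]; positivity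
    rw [max_eq_right h0] at h1
    have hB' : (spanCount E S : ℤ) = k * S.card - l := hB
    push_cast at h1
    omega
  · intro hnb S
    rw [key S]
    by_cases h : u ∈ S ∧ v ∈ S
    · rw [if_pos h]
      have hcard : 2 ≤ S.card := Finset.one_lt_card.2 ⟨u, h.1, v, h.2, huv⟩
      have hk : 0 < k := by omega
      have h2k : l < k * S.card := by
        calc l < 2 * k := hl2
        _ ≤ k * S.card := by nlinarith
      have hne : (spanCount E S : ℤ) ≠ k * S.card - l := fun he => hnb ⟨S, he, h⟩
      have := hS S
      rw [max_eq_right (by omega)] at this ⊢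
      push_cast
      omega
    · rw [if_neg h]
      simpa using hS S
end

section
/- Let k, ℓ be integers with 0 ≤ ℓ < 2k, let G = (V, E) be a (k,ℓ)-tight multigraph, and let u ≠ v be two vertices of V. Let V* be the intersection of all blocks of G containing both u and v (this family is nonempty since V itself is such a block). Then: (a) V* is a block of G; and (b) the multigraph H⁺ on V* whose edge multiset consists of all edges of E spanned by V* together with one new edge e = uv is a circuit, i.e., H⁺ is not (k,ℓ)-sparse but deleting any single edge from H⁺ yields a (k,ℓ)-sparse multigraph. -/
section Aux
variable {V : Type*} [DecidableEq V]

lemma mem_sym2_inter' {S T : Finset V} {e : Sym2 V} :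
    e ∈ (S ∩ T).sym2 ↔ e ∈ S.sym2 ∧ e ∈ T.sym2 := by
  simp only [Finset.mem_sym2_iff, Finset.mem_inter, forall_and]

lemma spanCount_mono (E : Multiset (Sym2 V)) {S T : Finset V} (h : S ⊆ T) :
    spanCount E S ≤ spanCount E T :=
  Multiset.card_le_card <| Multiset.monotone_filter_right E
    (fun e he => Finset.sym2_mono h he)

lemma spanCount_supermodular (E : Multiset (Sym2 V)) (A B : Finset V) :
    spanCount E A + spanCount E B ≤ spanCount E (A ∪ B) + spanCount E (A ∩ B) := by
  classical
  unfold spanCount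
  rw [← Multiset.card_add, ← Multiset.card_add, Multiset.filter_add_filter]
  apply Multiset.card_le_card
  gcongr
  · exact Multiset.monotone_filter_right E (fun e he => by
      rcases he with h | h
      · exact Finset.sym2_mono Finset.subset_union_left h
      · exact Finset.sym2_mono Finset.subset_union_right h)
  · exact Multiset.monotone_filter_right E (fun e he => mem_sym2_inter'.2 he)

lemma spanCount_filter_sym2 (E : Multiset (Sym2 V)) (W S : Finset V) :
    spanCount (E.filter (fun e => e ∈ W.sym2)) S = spanCount E (S ∩ W) := by
  unfold spanCount
  rw [Multiset.filter_filter]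
  congr 1
  exact Multiset.filter_congr (fun e _ => (mem_sym2_inter' (S:=S) (T:=W)).symm)

lemma spanCount_add (M N : Multiset (Sym2 V)) (S : Finset V) :
    spanCount (M + N) S = spanCount M S + spanCount N S := by
  unfold spanCount; rw [Multiset.filter_add, Multiset.card_add]

lemma spanCount_singleton (e : Sym2 V) (S : Finset V) :
    spanCount ({e} : Multiset (Sym2 V)) S = if e ∈ S.sym2 then 1 else 0 := by
  unfold spanCount
  rw [Multiset.filter_singleton]
  split <;> simp

lemma spanCount_erase {M : Multiset (Sym2 V)} {e : Sym2 V} (he : e ∈ M) (S : Finset V) :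
    (spanCount (M.erase e) S : ℤ) = spanCount M S - if e ∈ S.sym2 then 1 else 0 := by
  conv_rhs => rw [← Multiset.cons_erase he]
  unfold spanCount
  rw [Multiset.filter_cons]
  split <;> simp

end Aux




lemma block_inter (k l : ℤ) (hl0 : 0 ≤ l) (hl2 : l < 2 * k)
    {V : Type*} [Fintype V] [DecidableEq V] (E : Multiset (Sym2 V))
    (hsp : Sparse k l E) {u v : V} (huv : u ≠ v) {A B : Finset V}
    (hA : IsBlock k l E A) (hB : IsBlock k l E B)
    (huA : u ∈ A) (hvA : v ∈ A) (huB : u ∈ B) (hvB : v ∈ B) :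
    IsBlock k l E (A ∩ B) := by
  have hk : 1 ≤ k := by linarith
  have hsup := spanCount_supermodular E A B
  have hU := hsp (A ∪ B)
  have hI := hsp (A ∩ B)
  have hcard := Finset.card_union_add_card_inter A B
  have h2U : 1 < (A ∪ B).card :=
    Finset.one_lt_card.mpr ⟨u, Finset.mem_union_left _ huA, v, Finset.mem_union_left _ hvA, huv⟩
  have h2I : 1 < (A ∩ B).card :=
    Finset.one_lt_card.mpr ⟨u, Finset.mem_inter.2 ⟨huA, huB⟩, v, Finset.mem_inter.2 ⟨hvA, hvB⟩, huv⟩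
  have h2U' : (2 : ℤ) ≤ ((A ∪ B).card : ℤ) := by exact_mod_cast h2U
  have h2I' : (2 : ℤ) ≤ ((A ∩ B).card : ℤ) := by exact_mod_cast h2I
  have hposU : (0 : ℤ) ≤ k * (A ∪ B).card - l := by nlinarith
  have hposI : (0 : ℤ) ≤ k * (A ∩ B).card - l := by nlinarith
  rw [max_eq_right hposU] at hU
  rw [max_eq_right hposI] at hI
  have hcard' : ((A ∪ B).card : ℤ) + ((A ∩ B).card : ℤ) = (A.card : ℤ) + (B.card : ℤ) := by
    exact_mod_cast hcard
  have hsup' : (spanCount E A : ℤ) + (spanCount E B : ℤ)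
      ≤ (spanCount E (A ∪ B) : ℤ) + (spanCount E (A ∩ B) : ℤ) := by exact_mod_cast hsup
  have hm : k * ((A ∪ B).card : ℤ) + k * ((A ∩ B).card : ℤ)
      = k * (A.card : ℤ) + k * (B.card : ℤ) := by linear_combination k * hcard'
  unfold IsBlock at *
  linarith [hA, hB]



/-- In a `(k,ℓ)`-tight multigraph, the intersection `V*` of all blocks containing two
given vertices `u ≠ v` is itself a block, and the induced multigraph on `V*` together
with one new edge `uv` is a circuit: it is not `(k,ℓ)`-sparse, but deleting any single
edge from it yields a `(k,ℓ)`-sparse multigraph. -/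
theorem stmt14 (k l : ℤ) (hl0 : 0 ≤ l) (hl2 : l < 2 * k)
    {V : Type*} [Fintype V] [DecidableEq V]
    (E : Multiset (Sym2 V)) (hT : Tight k l E)
    (u v : V) (huv : u ≠ v)
    (Vstar : Finset V)
    (hVstar : ∀ w : V,
      w ∈ Vstar ↔ ∀ S : Finset V, IsBlock k l E S → u ∈ S → v ∈ S → w ∈ S) :
    IsBlock k l E Vstar ∧
    (¬ Sparse k l (E.filter (fun e => e ∈ Vstar.sym2) + {s(u, v)})) ∧
    (∀ e ∈ E.filter (fun e => e ∈ Vstar.sym2) + ({s(u, v)} : Multiset (Sym2 V)),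
      Sparse k l ((E.filter (fun e => e ∈ Vstar.sym2) + {s(u, v)}).erase e)) := by
  classical
  have hk : 1 ≤ k := by linarith
  obtain ⟨hsp, hcard⟩ := hT
  have huniv : IsBlock k l E (Finset.univ : Finset V) := by
    have hfe : E.filter (fun e => e ∈ (Finset.univ : Finset V).sym2) = E :=
      Multiset.filter_eq_self.2 (fun e _ => Finset.mem_sym2_iff.2 (fun y _ => Finset.mem_univ y))
    unfold IsBlock spanCount
    rw [hfe, Finset.card_univ]
    exact hcard
  obtain ⟨B, hBmem, hBmin⟩ := Finset.exists_min_image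
    (Finset.univ.filter (fun S : Finset V => IsBlock k l E S ∧ u ∈ S ∧ v ∈ S))
    (fun S => S.card)
    ⟨Finset.univ, by simp [huniv]⟩
  simp only [Finset.mem_filter, Finset.mem_univ, true_and] at hBmem hBmin
  obtain ⟨hBblock, huB, hvB⟩ := hBmem
  have hBleast : ∀ S : Finset V, IsBlock k l E S → u ∈ S → v ∈ S → B ⊆ S := by
    intro S hS huS hvS
    have hIB : IsBlock k l E (B ∩ S) :=
      block_inter k l hl0 hl2 E hsp huv hBblock hS huB hvB huS hvS
    have hle := hBmin (B ∩ S) ⟨hIB, Finset.mem_inter.2 ⟨huB, huS⟩, Finset.mem_inter.2 ⟨hvB, hvS⟩⟩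
    have heq : B ∩ S = B := Finset.eq_of_subset_of_card_le Finset.inter_subset_left hle
    rw [← heq]
    exact Finset.inter_subset_right
  have hVB : Vstar = B := by
    ext w
    rw [hVstar w]
    exact ⟨fun h => h B hBblock huB hvB, fun hw S hS huS hvS => hBleast S hS huS hvS hw⟩
  subst hVB
  have hsuv : s(u, v) ∈ Vstar.sym2 := Finset.mk_mem_sym2_iff.2 ⟨huB, hvB⟩
  have h2B : 1 < Vstar.card := Finset.one_lt_card.mpr ⟨u, huB, v, hvB, huv⟩
  have h2B' : (2 : ℤ) ≤ (Vstar.card : ℤ) := by exact_mod_cast h2B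
  have hposB : (0 : ℤ) < k * Vstar.card - l := by nlinarith
  have hspanF : spanCount (E.filter (fun e => e ∈ Vstar.sym2)) Vstar = spanCount E Vstar := by
    rw [spanCount_filter_sym2, Finset.inter_self]
  refine ⟨hBblock, ?_, ?_⟩
  · intro hS
    have h := hS Vstar
    rw [spanCount_add, hspanF, spanCount_singleton, if_pos hsuv, max_eq_right hposB.le] at h
    push_cast at h
    unfold IsBlock at hBblock
    linarith
  · intro e he S
    have hfill : (spanCount ((E.filter (fun e => e ∈ Vstar.sym2) + {s(u, v)}).erase e) S : ℤ)
        = (spanCount E (S ∩ Vstar) : ℤ) + (if s(u, v) ∈ S.sym2 then 1 else 0)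
          - (if e ∈ S.sym2 then 1 else 0) := by
      rw [spanCount_erase he, spanCount_add, spanCount_filter_sym2, spanCount_singleton]
      push_cast
      ring
    have hTS : (S ∩ Vstar).card ≤ S.card := Finset.card_le_card Finset.inter_subset_left
    have hTS' : ((S ∩ Vstar).card : ℤ) ≤ (S.card : ℤ) := by exact_mod_cast hTS
    have hindnn : (0 : ℤ) ≤ if e ∈ S.sym2 then 1 else 0 := by split <;> norm_num
    have hsparseT := hsp (S ∩ Vstar)
    by_cases huvS : u ∈ S ∧ v ∈ S
    · obtain ⟨huS, hvS⟩ := huvS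
      have huT : u ∈ S ∩ Vstar := Finset.mem_inter.2 ⟨huS, huB⟩
      have hvT : v ∈ S ∩ Vstar := Finset.mem_inter.2 ⟨hvS, hvB⟩
      have h2T : 1 < (S ∩ Vstar).card := Finset.one_lt_card.mpr ⟨u, huT, v, hvT, huv⟩
      have h2T' : (2 : ℤ) ≤ ((S ∩ Vstar).card : ℤ) := by exact_mod_cast h2T
      have hposT : (0 : ℤ) ≤ k * (S ∩ Vstar).card - l := by nlinarith
      rw [max_eq_right hposT] at hsparseT
      have h2S : (2 : ℤ) ≤ (S.card : ℤ) := le_trans h2T' hTS'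
      have hposS : (0 : ℤ) ≤ k * S.card - l := by nlinarith
      refine le_trans ?_ (le_max_right 0 (k * S.card - l))
      rw [hfill]
      rcases lt_or_eq_of_le hsparseT with hlt | heqT
      · have hsle : (if s(u, v) ∈ S.sym2 then (1:ℤ) else 0) ≤ 1 := by split <;> norm_num
        nlinarith
      · have hTblock : IsBlock k l E (S ∩ Vstar) := heqT
        have hVsub : Vstar ⊆ S ∩ Vstar := hBleast _ hTblock huT hvT
        have hVS : Vstar ⊆ S := hVsub.trans Finset.inter_subset_left
        have hTB : S ∩ Vstar = Vstar := Finset.Subset.antisymm Finset.inter_subset_right hVsub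
        have heS : e ∈ S.sym2 := by
          rcases Multiset.mem_add.1 he with hF | hsingle
          · exact Finset.sym2_mono hVS (Multiset.of_mem_filter hF)
          · rw [Multiset.mem_singleton.1 hsingle]
            exact Finset.mk_mem_sym2_iff.2 ⟨huS, hvS⟩
        have hsS : s(u, v) ∈ S.sym2 := Finset.mk_mem_sym2_iff.2 ⟨huS, hvS⟩
        rw [if_pos heS, if_pos hsS, heqT, hTB]
        have hBS : (Vstar.card : ℤ) ≤ (S.card : ℤ) := by
          exact_mod_cast Finset.card_le_card hVS
        nlinarith
    · have hnsuv : s(u, v) ∉ S.sym2 := by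
        rw [Finset.mk_mem_sym2_iff]
        exact huvS
      rw [hfill, if_neg hnsuv]
      have hmax : max 0 (k * ((S ∩ Vstar).card : ℤ) - l) ≤ max 0 (k * (S.card : ℤ) - l) := by
        apply max_le_max le_rfl
        nlinarith
      linarith
end

section
/- Let k, ℓ be integers with 0 ≤ ℓ < 2k, let G = (V, E) be a (k,ℓ)-tight multigraph, and let v ∈ V be a vertex of degree k + b with b ≥ 1. Let N(v) ⊆ V \ {v} be the set of neighbors of v (endpoints other than v of edges incident to v). Then span(N(v)) ≤ k·|N(v)| − ℓ − b; in particular, N(v) does not form a block of G. -/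
/-- In a `(k,ℓ)`-tight multigraph, if a vertex `v` has degree `k + b` with `b ≥ 1`, then
its neighbor set `N` spans at most `k|N| - ℓ - b` edges; in particular `N` is not a block. -/
theorem stmt15 (k l : ℤ) (hl0 : 0 ≤ l) (hl2 : l < 2 * k)
    {V : Type*} [Fintype V] [DecidableEq V]
    (E : Multiset (Sym2 V)) (hT : Tight k l E)
    (v : V) (b : ℤ) (hb : 1 ≤ b)
    (hdeg : ((E.filter (fun e => v ∈ e)).card : ℤ) = k + b)
    (N : Finset V) (hN : ∀ u : V, u ∈ N ↔ u ≠ v ∧ s(u, v) ∈ E) :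
    (spanCount E N : ℤ) ≤ k * N.card - l - b ∧ ¬ IsBlock k l E N := by
  have hvN : v ∉ N := by
    intro h
    exact ((hN v).1 h).1 rfl
  have hN' : ∀ u : V, u ≠ v → s(u, v) ∈ E → u ∈ N := fun u h1 h2 => (hN u).2 ⟨h1, h2⟩
  -- key counting identity
  have key : spanCount E (insert v N) = (E.filter (fun e => v ∈ e)).card + spanCount E N := by
    unfold spanCount
    have hsplit := Multiset.filter_add_not (fun e => v ∈ e)
      (E.filter (fun e => e ∈ (insert v N).sym2))
    have hcard := congrArg Multiset.card hsplit
    rw [Multiset.card_add] at hcard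
    rw [Multiset.filter_filter, Multiset.filter_filter] at hcard
    have h1 : E.filter (fun e => v ∈ e ∧ e ∈ (insert v N).sym2)
        = E.filter (fun e => v ∈ e) := by
      apply Multiset.filter_congr
      intro e he
      induction e using Sym2.ind with
      | _ x y =>
        simp only [Sym2.mem_iff, Finset.mk_mem_sym2_iff, Finset.mem_insert]
        constructor
        · rintro ⟨h, -⟩; exact h
        · rintro (rfl | rfl)
          · refine ⟨Or.inl rfl, Or.inl rfl, ?_⟩
            rcases eq_or_ne y v with rfl | hy
            · exact Or.inl rfl
            · exact Or.inr (hN' y hy (by rwa [Sym2.eq_swap] at he))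
          · refine ⟨Or.inr rfl, ?_, Or.inl rfl⟩
            rcases eq_or_ne x v with rfl | hx
            · exact Or.inl rfl
            · exact Or.inr (hN' x hx he)
    have h2 : E.filter (fun e => ¬ v ∈ e ∧ e ∈ (insert v N).sym2)
        = E.filter (fun e => e ∈ N.sym2) := by
      apply Multiset.filter_congr
      intro e _
      induction e using Sym2.ind with
      | _ x y =>
        simp only [Sym2.mem_iff, Finset.mk_mem_sym2_iff, Finset.mem_insert]
        constructor
        · rintro ⟨hv, hx | hx, hy | hy⟩
          · exact (hv (Or.inl hx.symm)).elim
          · exact (hv (Or.inl hx.symm)).elim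
          · exact (hv (Or.inr hy.symm)).elim
          · exact ⟨hx, hy⟩
        · rintro ⟨hx, hy⟩
          refine ⟨?_, Or.inr hx, Or.inr hy⟩
          rintro (rfl | rfl)
          · exact hvN hx
          · exact hvN hy
    rw [h1, h2] at hcard
    exact hcard.symm
  have hcardS : (insert v N).card = N.card + 1 := Finset.card_insert_of_notMem hvN
  have hsp := hT.1 (insert v N)
  have hkey : (spanCount E (insert v N) : ℤ) = (k + b) + spanCount E N := by
    rw [key]; push_cast; linarith [hdeg]
  have hk : 0 < k := by linarith
  have hmax : (spanCount E (insert v N) : ℤ) ≤ k * (insert v N).card - l := by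
    rcases le_or_gt (k * (insert v N).card - l) 0 with h | h
    · rw [max_eq_left h] at hsp
      have : (0 : ℤ) ≤ spanCount E N := Int.natCast_nonneg _
      linarith [hkey ▸ hsp]
    · rwa [max_eq_right h.le] at hsp
  rw [hkey, hcardS] at hmax
  push_cast at hmax
  constructor
  · linarith
  · intro hB
    unfold IsBlock at hB
    linarith
end

section
/- Let k, ℓ be integers with 0 < ℓ ≤ k and let G = (V, E) be a (k,ℓ)-tight multigraph with |V| = n ≥ 1. Then E contains ℓ edge-disjoint spanning trees: there exist ℓ pairwise disjoint sub-multisets T₁, …, T_ℓ of E such that each Tᵢ consists of n − 1 loopless edges and the multigraph (V, Tᵢ) is connected. -/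
open Finset Relation

namespace Multigraph

variable {V : Type*}

def Reach (X : Multiset (Sym2 V)) : V → V → Prop :=
  ReflTransGen fun a b => s(a, b) ∈ X

section Reach

variable {X Y : Multiset (Sym2 V)} {u v x y z : V}

theorem Reach.refl (X : Multiset (Sym2 V)) (x : V) : Reach X x x := ReflTransGen.refl

theorem Reach.single (h : s(x, y) ∈ X) : Reach X x y := ReflTransGen.single h

theorem Reach.trans (h : Reach X x y) (h' : Reach X y z) : Reach X x z := ReflTransGen.trans h h'

theorem Reach.symm (h : Reach X x y) : Reach X y x := by
  induction h with
  | refl => exact .refl X x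
  | tail _ hcd ih => exact ReflTransGen.head (by rwa [Sym2.eq_swap]) ih

theorem Reach.lift (hXY : ∀ a b, s(a, b) ∈ X → Reach Y a b) (h : Reach X x y) : Reach Y x y :=
  ReflTransGen.lift' id hXY _ _ h

theorem Reach.mono (hXY : X ⊆ Y) (h : Reach X x y) : Reach Y x y :=
  h.lift fun _ _ hab => .single (hXY hab)

theorem Reach.of_cons (h : Reach (s(u, v) ::ₘ X) x y) :
    Reach X x y ∨ Reach X x u ∧ Reach X v y ∨ Reach X x v ∧ Reach X u y := by
  induction h with
  | refl => exact .inl (.refl X x)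
  | @tail c d _ hcd ih =>
    rcases Multiset.mem_cons.mp hcd with hcd | hcd
    · rcases Sym2.eq_iff.mp hcd with ⟨rfl, rfl⟩ | ⟨rfl, rfl⟩
      · rcases ih with h | ⟨h, -⟩ | ⟨h, -⟩
        exacts [.inr (.inl ⟨h, .refl X _⟩), .inr (.inl ⟨h, .refl X _⟩), .inl h]
      · rcases ih with h | ⟨h, -⟩ | ⟨h, -⟩
        exacts [.inr (.inr ⟨h, .refl X _⟩), .inl h, .inr (.inr ⟨h, .refl X _⟩)]
    · rcases ih with h | ⟨h, h'⟩ | ⟨h, h'⟩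
      exacts [.inl (h.tail hcd), .inr (.inl ⟨h, h'.tail hcd⟩), .inr (.inr ⟨h, h'.tail hcd⟩)]

theorem Reach.exists_crossing {S : Finset V} (h : Reach X x y) (hx : x ∈ S) (hy : y ∉ S) :
    ∃ e ∈ X, ∃ a b : V, e = s(a, b) ∧ a ∈ S ∧ b ∉ S := by
  induction h with
  | refl => exact absurd hx hy
  | @tail c d _ hcd ih =>
    by_cases hc : c ∈ S
    · exact ⟨_, hcd, c, d, rfl, hc, hy⟩
    · exact ih hc

end Reach

def IsForest [DecidableEq V] (X : Multiset (Sym2 V)) : Prop :=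
  ∀ a b, s(a, b) ∈ X → ¬ Reach (X.erase s(a, b)) a b

section IsForest

variable [DecidableEq V] {X Y : Multiset (Sym2 V)} {u v x y : V}

theorem IsForest.mono (hX : IsForest X) (hYX : Y ≤ X) : IsForest Y := fun a b hab hr =>
  hX a b (Multiset.mem_of_le hYX hab)
    (hr.mono (Multiset.subset_of_le (Multiset.erase_le_erase _ hYX)))

theorem IsForest.cons (hX : IsForest X) (huv : ¬ Reach X u v) : IsForest (s(u, v) ::ₘ X) := by
  intro a b hab
  by_cases he : s(a, b) = s(u, v)
  · rw [he, Multiset.erase_cons_head]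
    rcases Sym2.eq_iff.mp he with ⟨rfl, rfl⟩ | ⟨rfl, rfl⟩
    exacts [huv, fun h => huv h.symm]
  have habX : s(a, b) ∈ X := (Multiset.mem_cons.mp hab).resolve_left he
  rw [Multiset.erase_cons_tail _ (Ne.symm he)]
  intro hr
  have hsub : X.erase s(a, b) ⊆ X := Multiset.subset_of_le (Multiset.erase_le _ _)
  rcases hr.of_cons with h | ⟨hau, hvb⟩ | ⟨hav, hub⟩
  · exact hX a b habX h
  · exact huv ((hau.mono hsub).symm.trans ((Reach.single habX).trans (hvb.mono hsub).symm))
  · exact huv ((hub.mono hsub).trans ((Reach.single habX).symm.trans (hav.mono hsub)))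

theorem isForest_cons_iff : IsForest (s(u, v) ::ₘ X) ↔ IsForest X ∧ ¬ Reach X u v :=
  ⟨fun h => ⟨h.mono (Multiset.le_cons_self _ _), by
      simpa using h u v (Multiset.mem_cons_self _ _)⟩,
    fun h => h.1.cons h.2⟩

theorem IsForest.not_isDiag (hX : IsForest X) {e : Sym2 V} (he : e ∈ X) : ¬ e.IsDiag := by
  induction e with
  | h a b =>
    rintro (rfl : a = b)
    exact hX a a he (.refl _ a)

/-- Every edge of the `x`-`y` path of a forest separates `x` from `y`. -/
theorem IsForest.reflTransGen_separating (hY : IsForest Y) (h : Reach Y x y) :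
    ReflTransGen (fun a b => s(a, b) ∈ Y ∧ ¬ Reach (Y.erase s(a, b)) x y) x y := by
  induction Y using Multiset.strongInductionOn with
  | ih Y ih =>
    by_cases hsep : ∃ c d, s(c, d) ∈ Y ∧ Reach (Y.erase s(c, d)) x y
    swap
    · push Not at hsep
      exact ReflTransGen.mono (fun a b hab => ⟨hab, hsep a b hab⟩) _ _ h
    obtain ⟨c, d, hcd, hxy⟩ := hsep
    refine ReflTransGen.mono ?_ _ _
      (ih _ (Multiset.erase_lt.mpr hcd) (hY.mono (Multiset.erase_le _ _)) hxy)
    rintro a b ⟨hab, hnr⟩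
    have hsub : Y.erase s(c, d) ⊆ Y := Multiset.subset_of_le (Multiset.erase_le _ _)
    refine ⟨hsub hab, fun hr => ?_⟩
    have hne : s(a, b) ≠ s(c, d) := by
      rintro he
      exact hY c d hcd (.single (he ▸ hab))
    rw [← Multiset.cons_erase ((Multiset.mem_erase_of_ne hne.symm).mpr hcd),
      Multiset.erase_comm] at hr
    have hsub' : (Y.erase s(c, d)).erase s(a, b) ⊆ Y.erase s(c, d) :=
      Multiset.subset_of_le (Multiset.erase_le _ _)
    -- `x` and `y` are joined in `Y` without `s(c, d)`, so they cannot lie on its two sides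
    rcases hr.of_cons with h | ⟨hxc, hdy⟩ | ⟨hxd, hcy⟩
    · exact hnr h
    · exact hY c d hcd ((hxc.mono hsub').symm.trans (hxy.trans (hdy.mono hsub').symm))
    · exact hY c d hcd ((hcy.mono hsub').trans (hxy.symm.trans (hxd.mono hsub')))

end IsForest

theorem card_image_le_card_image {β γ δ : Type*} [DecidableEq γ] [DecidableEq δ] {s : Finset β}
    {f : β → γ} {g : β → δ} (h : ∀ a ∈ s, ∀ b ∈ s, g a = g b → f a = f b) :
    #(s.image f) ≤ #(s.image g) := by
  rcases s.eq_empty_or_nonempty with rfl | ⟨a₀, -⟩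
  · simp
  have : Nonempty β := ⟨a₀⟩
  refine card_le_card_of_surjOn (f ∘ Function.invFunOn g s) ?_
  rintro _ hc
  obtain ⟨a, ha, rfl⟩ := mem_image.mp (mem_coe.mp hc)
  have hex : ∃ b ∈ (s : Set β), g b = g a := ⟨a, ha, rfl⟩
  exact ⟨g a, mem_image_of_mem g ha,
    h _ (Function.invFunOn_mem hex) a ha (Function.invFunOn_eq hex)⟩

section Components

variable [Fintype V] {X : Multiset (Sym2 V)} {u v w : V}

open scoped Classical in
noncomputable def component (X : Multiset (Sym2 V)) (v : V) : Finset V := univ.filter (Reach X v)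

theorem mem_component : w ∈ component X v ↔ Reach X v w := by
  simp [component]

theorem component_eq_iff : component X v = component X w ↔ Reach X v w := by
  refine ⟨fun h => mem_component.mp (h ▸ mem_component.mpr (.refl X w)), fun h => ?_⟩
  ext z
  simp only [mem_component]
  exact ⟨h.symm.trans, h.trans⟩

variable [DecidableEq V]

noncomputable def numComponents (X : Multiset (Sym2 V)) : ℕ := #(univ.image (component X))

theorem numComponents_le_card_image {α : Type*} [DecidableEq α] (f : V → α)
    (hf : ∀ v w, f v = f w → Reach X v w) : numComponents X ≤ #(univ.image f) :=
  card_image_le_card_image fun v _ w _ h => component_eq_iff.mpr (hf v w h)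

theorem numComponents_zero : numComponents (0 : Multiset (Sym2 V)) = Fintype.card V := by
  refine card_image_of_injective _ fun v w h => ?_
  induction component_eq_iff.mp h with
  | refl => rfl
  | tail _ hbc => exact absurd hbc (Multiset.notMem_zero _)

theorem numComponents_le_numComponents_cons (u v : V) (X : Multiset (Sym2 V)) :
    numComponents X ≤ numComponents (s(u, v) ::ₘ X) + 1 := by
  classical
  set s := univ.filter fun w => ¬ Reach X v w
  have hcover : univ.image (component X) ⊆ insert (component X v) (s.image (component X)) := by
    intro C hC
    obtain ⟨w, -, rfl⟩ := mem_image.mp hC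
    by_cases hw : Reach X v w
    · rw [← component_eq_iff.mpr hw]
      exact mem_insert_self _ _
    · exact mem_insert_of_mem (mem_image_of_mem _ (by simpa [s] using hw))
  -- away from the component of `v`, the new edge merges no components
  have hsep : #(s.image (component X)) ≤ #(s.image (component (s(u, v) ::ₘ X))) :=
    card_image_le_card_image fun a ha b hb hab => by
      simp only [s, mem_filter, mem_univ, true_and] at ha hb
      rw [component_eq_iff] at hab ⊢
      rcases hab.of_cons with h | ⟨-, hvb⟩ | ⟨hav, -⟩
      exacts [h, absurd hvb hb, absurd hav.symm ha]
  calc numComponents X ≤ #(insert (component X v) (s.image (component X))) := card_le_card hcover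
    _ ≤ #(s.image (component X)) + 1 := card_insert_le _ _
    _ ≤ numComponents (s(u, v) ::ₘ X) + 1 := by
      gcongr
      exact hsep.trans (card_le_card (image_subset_image (filter_subset _ _)))

theorem numComponents_cons_add_one_le (huv : ¬ Reach X u v) :
    numComponents (s(u, v) ::ₘ X) + 1 ≤ numComponents X := by
  classical
  set s := univ.filter fun w => ¬ Reach X v w
  have hu : u ∈ s := by simpa [s] using fun h => huv h.symm
  have hcover : univ.image (component (s(u, v) ::ₘ X)) ⊆ s.image (component (s(u, v) ::ₘ X)) := by
    intro C hC
    obtain ⟨w, -, rfl⟩ := mem_image.mp hC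
    by_cases hw : Reach X v w
    · have hwu : Reach (s(u, v) ::ₘ X) w u :=
        (hw.symm.mono (Multiset.subset_cons _ _)).trans
          (Reach.single (Multiset.mem_cons_self _ _)).symm
      rw [component_eq_iff.mpr hwu]
      exact mem_image_of_mem _ hu
    · exact mem_image_of_mem _ (by simpa [s] using hw)
  have hmono : #(s.image (component (s(u, v) ::ₘ X))) ≤ #(s.image (component X)) :=
    card_image_le_card_image fun a _ b _ hab =>
      component_eq_iff.mpr ((component_eq_iff.mp hab).mono (Multiset.subset_cons _ _))
  have hv : component X v ∉ s.image (component X) := by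
    intro hv
    obtain ⟨a, ha, hav⟩ := mem_image.mp hv
    simp only [s, mem_filter, mem_univ, true_and] at ha
    exact ha (component_eq_iff.mp hav).symm
  calc numComponents (s(u, v) ::ₘ X) + 1 ≤ #(s.image (component X)) + 1 := by
        gcongr
        exact (card_le_card hcover).trans hmono
    _ = #(insert (component X v) (s.image (component X))) := (card_insert_of_notMem hv).symm
    _ ≤ numComponents X :=
      card_le_card (insert_subset (mem_image_of_mem _ (mem_univ v))
        (image_subset_image (subset_univ s)))

theorem card_le_card_add_numComponents (X : Multiset (Sym2 V)) :
    Fintype.card V ≤ Multiset.card X + numComponents X := by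
  induction X using Multiset.induction_on with
  | empty => simp [numComponents_zero]
  | cons e X ih =>
    induction e with
    | h u v =>
      have := numComponents_le_numComponents_cons u v X
      rw [Multiset.card_cons]
      omega

theorem IsForest.card_add_numComponents_le (hX : IsForest X) :
    Multiset.card X + numComponents X ≤ Fintype.card V := by
  induction X using Multiset.induction_on with
  | empty => simp [numComponents_zero]
  | cons e X ih =>
    induction e with
    | h u v =>
      obtain ⟨hX, huv⟩ := isForest_cons_iff.mp hX
      have := numComponents_cons_add_one_le huv
      have := ih hX
      rw [Multiset.card_cons]
      omega

theorem numComponents_pos [Nonempty V] (X : Multiset (Sym2 V)) : 0 < numComponents X :=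
  card_pos.mpr (univ_nonempty.image _)

theorem IsForest.card_add_one_le [Nonempty V] (hX : IsForest X) :
    Multiset.card X + 1 ≤ Fintype.card V :=
  (Nat.add_le_add_left (numComponents_pos X) _).trans hX.card_add_numComponents_le

theorem IsForest.reach_of_card_add_one (hX : IsForest X)
    (hcard : Multiset.card X + 1 = Fintype.card V) (v w : V) : Reach X v w := by
  have hone : numComponents X ≤ 1 := by
    have := hX.card_add_numComponents_le
    omega
  exact component_eq_iff.mp
    (card_le_one.mp hone _ (mem_image_of_mem _ (mem_univ v)) _ (mem_image_of_mem _ (mem_univ w)))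

end Components

section Partition

variable {α : Type*} [DecidableEq α] (f : V → α)

def internalEdges (X : Multiset (Sym2 V)) : Multiset (Sym2 V) :=
  X.filter fun e => (e.map f).IsDiag

def crossingEdges (X : Multiset (Sym2 V)) : Multiset (Sym2 V) :=
  X.filter fun e => ¬ (e.map f).IsDiag

variable {f}

theorem mk_mem_internalEdges {X : Multiset (Sym2 V)} {a b : V} :
    s(a, b) ∈ internalEdges f X ↔ s(a, b) ∈ X ∧ f a = f b := by
  simp [internalEdges]

variable (f)

theorem card_internalEdges_add_card_crossingEdges (X : Multiset (Sym2 V)) :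
    Multiset.card (internalEdges f X) + Multiset.card (crossingEdges f X) = Multiset.card X := by
  rw [← Multiset.card_add, internalEdges, crossingEdges, Multiset.filter_add_not]

theorem card_internalEdges_eq_sum_spanCount [Fintype V] [DecidableEq V] (E : Multiset (Sym2 V)) :
    Multiset.card (internalEdges f E) =
      ∑ c ∈ univ.image f, spanCount E (univ.filter fun v => f v = c) := by
  -- sort the internal edges by the diagonal `s(c, c)` of `Sym2 α` that they map to
  rw [← Multiset.card_map (Sym2.map f),
    ← Multiset.sum_count_eq_card (s := (univ.image f).image Sym2.diag),
    sum_image fun _ _ _ _ h => Sym2.diag_injective h]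
  · refine sum_congr rfl fun c _ => ?_
    rw [Multiset.count_map, internalEdges, Multiset.filter_filter, spanCount]
    congr 1
    refine Multiset.filter_congr fun e _ => ?_
    induction e with
    | h u v =>
      simp only [Sym2.map_mk, Sym2.diag, Sym2.mk_isDiag_iff, Sym2.eq_iff, mk_mem_sym2_iff,
        mem_filter, mem_univ, true_and]
      grind
  · intro d hd
    obtain ⟨e, he, rfl⟩ := Multiset.mem_map.mp hd
    induction e with
    | h u v =>
      have huv : f u = f v := by simpa [internalEdges] using (Multiset.mem_filter.mp he).2
      exact mem_image.mpr ⟨f u, mem_image_of_mem f (mem_univ u), by simp [Sym2.diag, huv]⟩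

end Partition

theorem _root_.Tight.mul_card_image_sub_one_le {α : Type*} [Fintype V] [DecidableEq V]
    [DecidableEq α] {k l : ℤ} {E : Multiset (Sym2 V)} (hT : Tight k l E) (hk : 0 ≤ k)
    (hlk : l ≤ k) (f : V → α) :
    l * ((#(univ.image f) : ℤ) - 1) ≤ Multiset.card (crossingEdges f E) := by
  have hspan : ∀ c ∈ univ.image f, (spanCount E (univ.filter fun v => f v = c) : ℤ) ≤
      k * #(univ.filter fun v => f v = c) - l := by
    intro c hc
    obtain ⟨v, -, rfl⟩ := mem_image.mp hc
    have hpos : (1 : ℤ) ≤ #(univ.filter fun w => f w = f v) := by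
      exact_mod_cast card_pos.mpr ⟨v, by simp⟩
    have := hT.1 (univ.filter fun w => f w = f v)
    rwa [max_eq_right (by nlinarith)] at this
  have hfibers : ∑ c ∈ univ.image f, (#(univ.filter fun v => f v = c) : ℤ) = Fintype.card V := by
    exact_mod_cast (card_eq_sum_card_image f univ).symm
  have hinternal : (Multiset.card (internalEdges f E) : ℤ) ≤
      k * Fintype.card V - l * #(univ.image f) := by
    rw [card_internalEdges_eq_sum_spanCount, Nat.cast_sum]
    refine (sum_le_sum hspan).trans_eq ?_
    rw [sum_sub_distrib, ← mul_sum, hfibers, sum_const, nsmul_eq_mul, mul_comm l]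
  have hsplit := card_internalEdges_add_card_crossingEdges f E
  have hcard := hT.2
  linarith

theorem _root_.Tight.nonempty [Fintype V] [DecidableEq V] {k l : ℤ}
    {E : Multiset (Sym2 V)} (hT : Tight k l E) (hl : 0 < l) : Nonempty V := by
  by_contra hV
  have hcard := hT.2
  rw [Fintype.card_eq_zero_iff.mpr (not_nonempty_iff.mp hV)] at hcard
  omega

section Packing

variable {ι : Type*} [DecidableEq V] [Fintype ι] (E : Multiset (Sym2 V))

def IsPacking (F : ι → Multiset (Sym2 V)) : Prop :=
  (∀ i, IsForest (F i)) ∧ ∑ i, F i ≤ E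

def IsMaxPacking (F : ι → Multiset (Sym2 V)) : Prop :=
  IsPacking E F ∧
    ∀ G : ι → Multiset (Sym2 V), IsPacking E G → Multiset.card (∑ i, G i) ≤ Multiset.card (∑ i, F i)

def IsFree (F : ι → Multiset (Sym2 V)) (e : Sym2 V) : Prop :=
  e ::ₘ ∑ i, F i ≤ E

theorem exists_isMaxPacking : ∃ F : ι → Multiset (Sym2 V), IsMaxPacking E F := by
  have hfin : {F : ι → Multiset (Sym2 V) | IsPacking E F}.Finite := by
    refine (Set.Finite.pi fun _ => (E.powerset.toFinset : Set (Multiset (Sym2 V))).toFinite).subset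
      fun F hF i _ => ?_
    simpa using (Multiset.le_sum_of_mem (Multiset.mem_map_of_mem F (mem_univ_val i))).trans hF.2
  obtain ⟨F, hF, hmax⟩ := Set.exists_max_image _ (fun F => Multiset.card (∑ i, F i)) hfin
    ⟨fun _ => 0, fun _ a b h => absurd h (Multiset.notMem_zero _), by simp⟩
  exact ⟨F, hF, hmax⟩

variable [DecidableEq ι]

def Exchange (F F' : ι → Multiset (Sym2 V)) : Prop :=
  ∃ i e e', IsFree E F e ∧ e' ∈ F i ∧ IsForest (e ::ₘ (F i).erase e') ∧
    F' = Function.update F i (e ::ₘ (F i).erase e')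

variable {E}

theorem sum_update_exchange {F : ι → Multiset (Sym2 V)} {i : ι} (e : Sym2 V) {e' : Sym2 V}
    (he' : e' ∈ F i) :
    e' ::ₘ ∑ j, Function.update F i (e ::ₘ (F i).erase e') j = e ::ₘ ∑ j, F j := by
  rw [sum_update_of_mem (mem_univ i), ← erase_eq, Multiset.cons_add, Multiset.cons_swap,
    ← Multiset.cons_add, Multiset.cons_erase he', add_sum_erase _ _ (mem_univ i)]

theorem IsMaxPacking.exchange {F F' : ι → Multiset (Sym2 V)} (hF : IsMaxPacking E F)
    (h : Exchange E F F') : IsMaxPacking E F' := by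
  obtain ⟨i, e, e', he, he', hfor, rfl⟩ := h
  have hsum := sum_update_exchange e he'
  have hcard := congrArg Multiset.card hsum
  simp only [Multiset.card_cons] at hcard
  refine ⟨⟨Function.forall_update_iff _ (p := fun _ X => IsForest X) |>.mpr
    ⟨hfor, fun j _ => hF.1.1 j⟩, (Multiset.le_cons_self _ e').trans (hsum ▸ he)⟩, fun G hG => ?_⟩
  have := hF.2 G hG
  omega

theorem IsMaxPacking.of_reflTransGen {F F' : ι → Multiset (Sym2 V)} (hF : IsMaxPacking E F)
    (h : ReflTransGen (Exchange E) F F') : IsMaxPacking E F' := by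
  induction h with
  | refl => exact hF
  | tail _ hstep ih => exact ih.exchange hstep

theorem IsMaxPacking.reach_of_isFree {F : ι → Multiset (Sym2 V)} (hF : IsMaxPacking E F) {x y : V}
    (he : IsFree E F s(x, y)) (i : ι) : Reach (F i) x y := by
  by_contra hxy
  have hsum : ∑ j, Function.update F i (s(x, y) ::ₘ F i) j = s(x, y) ::ₘ ∑ j, F j := by
    rw [sum_update_of_mem (mem_univ i), ← erase_eq, Multiset.cons_add,
      add_sum_erase _ _ (mem_univ i)]
  have := hF.2 _ ⟨Function.forall_update_iff _ (p := fun _ X => IsForest X) |>.mpr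
    ⟨(hF.1.1 i).cons hxy, fun j _ => hF.1.1 j⟩, by rw [hsum]; exact he⟩
  rw [hsum, Multiset.card_cons] at this
  omega

end Packing

section Exchange

variable {ι : Type*} [DecidableEq V] [Fintype ι] [DecidableEq ι] {E : Multiset (Sym2 V)}

variable (E) in
open scoped Classical in
noncomputable def exchangeableEdges (F₀ : ι → Multiset (Sym2 V)) : Multiset (Sym2 V) :=
  E.filter fun e => ∃ F, ReflTransGen (Exchange E) F₀ F ∧ IsFree E F e

variable {F₀ F F' : ι → Multiset (Sym2 V)}

open scoped Classical in
theorem mem_exchangeableEdges {e : Sym2 V} :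
    e ∈ exchangeableEdges E F₀ ↔ ∃ F, ReflTransGen (Exchange E) F₀ F ∧ IsFree E F e := by
  refine ⟨fun he => (Multiset.mem_filter.mp he).2, fun ⟨F, hF, he⟩ => ?_⟩
  exact Multiset.mem_filter.mpr
    ⟨Multiset.mem_of_le he (Multiset.mem_cons_self _ _), F, hF, he⟩

variable [Fintype V]

local notation "internal" => internalEdges (component (exchangeableEdges E F₀))

theorem isDiag_map_of_isFree {e : Sym2 V} (he : IsFree E F₀ e) :
    (e.map (component (exchangeableEdges E F₀))).IsDiag := by
  induction e with
  | h a b =>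
    simpa [component_eq_iff] using Reach.single (mem_exchangeableEdges.mpr ⟨F₀, .refl, he⟩)

/-- Each edge of the path that a free edge closes in `F i` can be exchanged for it, and is then
free itself. -/
theorem IsMaxPacking.reach_internalEdges_of_isFree (hF₀ : IsMaxPacking E F₀)
    (hF : ReflTransGen (Exchange E) F₀ F) {x y : V} (he : IsFree E F s(x, y)) (i : ι) :
    Reach (internal (F i)) x y := by
  have hFmax := hF₀.of_reflTransGen hF
  refine ReflTransGen.mono ?_ _ _
    ((hFmax.1.1 i).reflTransGen_separating (hFmax.reach_of_isFree he i))
  rintro a b ⟨hab, hsep⟩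
  have hex : Exchange E F (Function.update F i (s(x, y) ::ₘ (F i).erase s(a, b))) :=
    ⟨i, _, _, he, hab, ((hFmax.1.1 i).mono (Multiset.erase_le _ _)).cons hsep, rfl⟩
  have hfree : IsFree E (Function.update F i (s(x, y) ::ₘ (F i).erase s(a, b))) s(a, b) := by
    rw [IsFree, sum_update_exchange _ hab]
    exact he
  exact mk_mem_internalEdges.mpr ⟨hab, component_eq_iff.mpr
    (.single (mem_exchangeableEdges.mpr ⟨_, hF.tail hex, hfree⟩))⟩

theorem IsMaxPacking.reach_internalEdges_of_exchange (hF₀ : IsMaxPacking E F₀)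
    (hF : ReflTransGen (Exchange E) F₀ F) (hFF' : Exchange E F F') {i : ι} {u v : V}
    (h : Reach (internal (F' i)) u v) : Reach (internal (F i)) u v := by
  obtain ⟨j, e, e', he, -, -, rfl⟩ := hFF'
  refine h.lift fun a b hab => ?_
  obtain ⟨hab, hcls⟩ := mk_mem_internalEdges.mp hab
  by_cases hij : i = j
  · subst hij
    rw [Function.update_self] at hab
    rcases Multiset.mem_cons.mp hab with rfl | hab
    · exact hF₀.reach_internalEdges_of_isFree hF he i
    · exact .single (mk_mem_internalEdges.mpr ⟨Multiset.mem_of_mem_erase hab, hcls⟩)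
  · rw [Function.update_of_ne hij] at hab
    exact .single (mk_mem_internalEdges.mpr ⟨hab, hcls⟩)

theorem IsMaxPacking.reach_internalEdges_of_reflTransGen (hF₀ : IsMaxPacking E F₀)
    (hF : ReflTransGen (Exchange E) F₀ F) {i : ι} {u v : V} :
    Reach (internal (F i)) u v → Reach (internal (F₀ i)) u v := by
  induction hF with
  | refl => exact id
  | tail hF hstep ih => exact fun h => ih (hF₀.reach_internalEdges_of_exchange hF hstep h)

theorem IsMaxPacking.reach_internalEdges (hF₀ : IsMaxPacking E F₀) {x y : V}
    (h : Reach (exchangeableEdges E F₀) x y) (i : ι) : Reach (internal (F₀ i)) x y :=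
  h.lift fun _ _ hab =>
    let ⟨_, hF, hfree⟩ := mem_exchangeableEdges.mp hab
    hF₀.reach_internalEdges_of_reflTransGen hF (hF₀.reach_internalEdges_of_isFree hF hfree i)

end Exchange

section Counting

variable {ι α : Type*} [DecidableEq V] [Fintype ι] [DecidableEq α]
  {E : Multiset (Sym2 V)} {F : ι → Multiset (Sym2 V)}

theorem isFree_of_mem_sub (hF : ∑ i, F i ≤ E) {e : Sym2 V} (he : e ∈ E - ∑ i, F i) :
    IsFree E F e := by
  rw [IsFree, ← Multiset.singleton_add, add_comm, ← le_tsub_iff_left hF]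
  exact Multiset.singleton_le.mpr he

theorem card_crossingEdges_eq_sum (hF : ∑ i, F i ≤ E) (f : V → α)
    (hfree : ∀ e, IsFree E F e → (e.map f).IsDiag) :
    Multiset.card (crossingEdges f E) = ∑ i, Multiset.card (crossingEdges f (F i)) := by
  have hrest : crossingEdges f (E - ∑ i, F i) = 0 :=
    Multiset.filter_eq_nil.mpr fun e he => not_not.mpr (hfree e (isFree_of_mem_sub hF he))
  rw [← add_tsub_cancel_of_le hF]
  simp only [crossingEdges, Multiset.filter_add] at hrest ⊢
  simp only [hrest, add_zero, ← Multiset.countP_eq_card_filter]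
  exact map_sum (Multiset.countPAddMonoidHom _) F univ

variable [Fintype V]

theorem card_mul_add_card_crossingEdges_le (hF : ∑ i, F i ≤ E) (f : V → α)
    (hconn : ∀ i v w, f v = f w → Reach (internalEdges f (F i)) v w)
    (hfree : ∀ e, IsFree E F e → (e.map f).IsDiag) :
    Fintype.card ι * Fintype.card V + Multiset.card (crossingEdges f E) ≤
      Multiset.card (∑ i, F i) + Fintype.card ι * #(univ.image f) := by
  have hblocks (i : ι) : Fintype.card V ≤ Multiset.card (internalEdges f (F i)) + #(univ.image f) :=
    (card_le_card_add_numComponents _).trans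
      (Nat.add_le_add_left (numComponents_le_card_image f (hconn i)) _)
  have hsplit : Multiset.card (∑ i, F i) =
      ∑ i, Multiset.card (internalEdges f (F i)) + ∑ i, Multiset.card (crossingEdges f (F i)) := by
    rw [Multiset.card_sum, ← sum_add_distrib]
    exact sum_congr rfl fun i _ => (card_internalEdges_add_card_crossingEdges f (F i)).symm
  have hsum := sum_le_sum fun i (_ : i ∈ univ) => hblocks i
  rw [sum_add_distrib, sum_const, sum_const, card_univ, smul_eq_mul, smul_eq_mul] at hsum
  rw [card_crossingEdges_eq_sum hF f hfree, hsplit]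
  omega

theorem IsMaxPacking.card_add_one_eq [Nonempty V] (hF : IsMaxPacking E F)
    (hsize : Fintype.card ι * (Fintype.card V - 1) ≤ Multiset.card (∑ i, F i)) (i : ι) :
    Multiset.card (F i) + 1 = Fintype.card V := by
  have hle (j : ι) : Multiset.card (F j) ≤ Fintype.card V - 1 := by
    have := (hF.1.1 j).card_add_one_le
    omega
  rw [Multiset.card_sum, ← card_univ, ← smul_eq_mul, ← sum_const] at hsize
  have := (sum_eq_sum_iff_of_le fun j _ => hle j).mp
    (le_antisymm (sum_le_sum fun j _ => hle j) hsize) i (mem_univ i)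
  have := Fintype.card_pos (α := V)
  omega

end Counting

end Multigraph

open Multigraph

theorem stmt17_general (k l : ℤ) (hl0 : 0 < l) (hlk : l ≤ k)
    {V : Type*} [Fintype V] [DecidableEq V]
    (E : Multiset (Sym2 V)) (hT : Tight k l E) :
    ∃ T : Fin l.toNat → Multiset (Sym2 V),
      (∑ i, T i) ≤ E ∧
      ∀ i : Fin l.toNat,
        Multiset.card (T i) = Fintype.card V - 1 ∧
        (∀ e ∈ T i, ¬ e.IsDiag) ∧
        (∀ S : Finset V, S.Nonempty → S ≠ Finset.univ →
          ∃ e ∈ T i, ∃ u v : V, e = s(u, v) ∧ u ∈ S ∧ v ∉ S) := by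
  have := hT.nonempty hl0
  obtain ⟨F, hF⟩ := exists_isMaxPacking E (ι := Fin l.toNat)
  set f := component (exchangeableEdges E F)
  have hcount := card_mul_add_card_crossingEdges_le hF.1.2 f
    (fun i v w h => hF.reach_internalEdges (component_eq_iff.mp h) i) fun _ => isDiag_map_of_isFree
  have hcross := hT.mul_card_image_sub_one_le (hl0.le.trans hlk) hlk f
  have hsize : l.toNat * (Fintype.card V - 1) ≤ Multiset.card (∑ i, F i) := by
    rw [Fintype.card_fin] at hcount
    have hl : (l.toNat : ℤ) = l := Int.toNat_of_nonneg hl0.le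
    have hV := Fintype.card_pos (α := V)
    zify [hV] at hcount ⊢
    rw [hl] at hcount ⊢
    linarith
  have hcard (i : Fin l.toNat) := hF.card_add_one_eq (by simpa using hsize) i
  refine ⟨F, hF.1.2, fun i => ⟨Nat.eq_sub_of_add_eq (hcard i), fun e he => (hF.1.1 i).not_isDiag he,
    fun S ⟨x, hx⟩ hS => ?_⟩⟩
  obtain ⟨y, hy⟩ : ∃ y, y ∉ S := by
    by_contra! h
    exact hS (eq_univ_of_forall h)
  exact ((hF.1.1 i).reach_of_card_add_one (hcard i) x y).exists_crossing hx hy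

/-- For `0 < ℓ ≤ k`, a `(k,ℓ)`-tight multigraph on `n ≥ 1` vertices contains `ℓ`
edge-disjoint spanning trees: `ℓ` pairwise disjoint sub-multisets of `E`, each consisting
of `n - 1` loopless edges and connected (every nonempty proper vertex subset is left by
one of its edges). -/
theorem stmt17 (k l : ℤ) (hl0 : 0 < l) (hlk : l ≤ k)
    {V : Type*} [Fintype V] [DecidableEq V] (hV : 1 ≤ Fintype.card V)
    (E : Multiset (Sym2 V)) (hT : Tight k l E) :
    ∃ T : Fin l.toNat → Multiset (Sym2 V),
      (∑ i, T i) ≤ E ∧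
      ∀ i : Fin l.toNat,
        Multiset.card (T i) = Fintype.card V - 1 ∧
        (∀ e ∈ T i, ¬ e.IsDiag) ∧
        (∀ S : Finset V, S.Nonempty → S ≠ Finset.univ →
          ∃ e ∈ T i, ∃ u v : V, e = s(u, v) ∧ u ∈ S ∧ v ∉ S) :=
  stmt17_general k l hl0 hlk E hT
end
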